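/- arXiv:1907.00432 — 11 statements merged into one kernel-verified Lean document; each statement's English description precedes it below -/
import Mathlib

section
/- If a linear order L has uncountable character, then there is an order-embedding of ω₁ into L or an order-embedding of ω₁ with the reversed order into L. -/
open Ordinal

/-- `L` has character at most `ω`: every point is the unique element lying between a
countable set below it and a countable set above it. -/
def CharLEOmega (L : Type*) [LinearOrder L] : Prop :=
  ∀ l : L, ∃ A B : Set L, A.Countable ∧ B.Countable ∧
    (∀ a ∈ A, ∀ b ∈ B, a < b) ∧
    {x | (∀ a ∈ A, a < x) ∧ (∀ b ∈ B, x < b)} = {l}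

/-!
If at every point `l` the interval `Iio l` had a countable cofinal subset and `Ioi l` a countable
coinitial one, these two sets would witness character `≤ ω` at `l`. So at some point one of the
two intervals (the second one order-dualised) has uncountable cofinality. In such an order every
countable set has a strict upper bound, and since the initial segments of `ω₁` are countable,
transfinite recursion along `ω₁` builds a strictly monotone map into it.
-/

open Cardinal Set

theorem Ordinal.countable_Iio_toType_omega_one (a : (ω_ 1).ToType) : (Iio a).Countable := by
  rw [← le_aleph0_iff_set_countable, ← lt_aleph_one_iff]
  simpa using mk_Iio_lt a (by simp)

theorem exists_gt_of_countable_of_aleph0_lt_cof {M : Type*} [LinearOrder M]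
    (hM : ℵ₀ < Order.cof M) {s : Set M} (hs : s.Countable) : ∃ x, ∀ y ∈ s, y < x := by
  have hcof : ¬ IsCofinal s := fun hcof =>
    (Order.cof_le hcof).trans (le_aleph0_iff_set_countable.2 hs) |>.not_gt hM
  simpa [IsCofinal] using hcof

theorem exists_strictMono_of_aleph0_lt_cof {α M : Type*} [Preorder α] [WellFoundedLT α]
    [LinearOrder M] (hα : ∀ a : α, (Iio a).Countable) (hM : ℵ₀ < Order.cof M) :
    ∃ f : α → M, StrictMono f := by
  have hbound (a : α) (g : ∀ b < a, M) : ∃ x, ∀ y ∈ range (fun b : Iio a => g b b.2), y < x :=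
    have := (hα a).to_subtype
    exists_gt_of_countable_of_aleph0_lt_cof hM (countable_range _)
  choose next hnext using hbound
  refine ⟨wellFounded_lt.fix next, fun b a hba => ?_⟩
  rw [wellFounded_lt.fix_eq next a]
  exact hnext a _ _ ⟨⟨b, hba⟩, rfl⟩

theorem setOf_between_eq_singleton {L : Type*} [LinearOrder L] {A B : Set L} {l : L}
    (hA : ∀ a ∈ A, a < l) (hB : ∀ b ∈ B, l < b)
    (hAcof : ∀ x < l, ∃ a ∈ A, x ≤ a) (hBcof : ∀ x, l < x → ∃ b ∈ B, b ≤ x) :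
    {x | (∀ a ∈ A, a < x) ∧ (∀ b ∈ B, x < b)} = {l} := by
  ext x
  refine ⟨fun ⟨hxA, hxB⟩ => ?_, by rintro rfl; exact ⟨hA, hB⟩⟩
  rcases lt_trichotomy x l with hlt | rfl | hgt
  · obtain ⟨a, ha, hxa⟩ := hAcof x hlt
    exact absurd (hxA a ha) hxa.not_gt
  · rfl
  · obtain ⟨b, hb, hbx⟩ := hBcof x hgt
    exact absurd (hxB b hb) hbx.not_gt

theorem CharLEOmega.of_cof_le_aleph0 {L : Type*} [LinearOrder L]
    (h : ∀ l : L, Order.cof (Iio l) ≤ ℵ₀ ∧ Order.cof (Ioi l)ᵒᵈ ≤ ℵ₀) : CharLEOmega L := by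
  intro l
  obtain ⟨A, hAcof, hAcard⟩ := Order.exists_cof_eq (Iio l)
  obtain ⟨B, hBcof, hBcard⟩ := Order.exists_cof_eq (Ioi l)ᵒᵈ
  have hAc : A.Countable := le_aleph0_iff_set_countable.1 (hAcard ▸ (h l).1)
  have hBc : B.Countable := le_aleph0_iff_set_countable.1 (hBcard ▸ (h l).2)
  refine ⟨(↑) '' A, (fun b => (OrderDual.ofDual b).1) '' B, hAc.image _, hBc.image _, ?_,
    setOf_between_eq_singleton ?_ ?_ (fun x hx => ?_) (fun x hx => ?_)⟩
  · rintro _ ⟨a, -, rfl⟩ _ ⟨b, -, rfl⟩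
    exact a.2.trans b.2
  · rintro _ ⟨a, -, rfl⟩
    exact a.2
  · rintro _ ⟨b, -, rfl⟩
    exact b.2
  · obtain ⟨a, ha, hxa⟩ := hAcof ⟨x, hx⟩
    exact ⟨a, mem_image_of_mem _ ha, hxa⟩
  · obtain ⟨b, hb, hbx⟩ := hBcof (OrderDual.toDual ⟨x, hx⟩)
    exact ⟨_, mem_image_of_mem _ hb, hbx⟩

theorem stmt1 (L : Type) [LinearOrder L] (h : ¬ CharLEOmega L) :
    Nonempty ((ω_ 1).ToType ↪o L) ∨ Nonempty (((ω_ 1).ToType)ᵒᵈ ↪o L) := by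
  obtain ⟨l, hl⟩ : ∃ l : L, ℵ₀ < Order.cof (Iio l) ∨ ℵ₀ < Order.cof (Ioi l)ᵒᵈ := by
    by_contra! hcof
    exact h (CharLEOmega.of_cof_le_aleph0 hcof)
  rcases hl with hl | hl
  · obtain ⟨f, hf⟩ := exists_strictMono_of_aleph0_lt_cof countable_Iio_toType_omega_one hl
    exact .inl ⟨(OrderEmbedding.ofStrictMono f hf).trans (OrderEmbedding.subtype _)⟩
  · obtain ⟨f, hf⟩ := exists_strictMono_of_aleph0_lt_cof countable_Iio_toType_omega_one hl
    exact .inr ⟨OrderEmbedding.ofStrictMono (fun x => (OrderDual.ofDual (f (OrderDual.ofDual x))).1)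
      fun _ _ hxy => hf hxy⟩
end

section
/- For every compact linear order L and every ordinal α, the lexicographic power L^α (functions from α to L ordered lexicographically) is a compact linear order; moreover if L is a linearly ordered continuum (compact and dense), then so is L^α. -/
/-! The supremum of a set `S` of functions on a well-ordered index set is built by transfinite
recursion: its value at `i` is the supremum of the values at `i` of those members of `S` that
agree with it at every earlier coordinate. Whether `toLex x ≤ toLex y` is decided at the first
coordinate where `x` and `y` differ, which shows that this function is the least upper bound.
Infima are suprema of lower bounds, and density of `L` passes to `L^α` by changing a single
coordinate. -/

/-- A compact line: every subset has a supremum and an infimum. -/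
def CompactLine (K : Type*) [LinearOrder K] : Prop :=
  ∀ S : Set K, (∃ a, IsLUB S a) ∧ (∃ a, IsGLB S a)

namespace Pi.Lex

variable {ι : Type*} {β : ι → Type*} [LinearOrder ι] [WellFoundedLT ι]

theorem toLex_le_toLex_of_forall [∀ i, PartialOrder (β i)] {x y : ∀ i, β i}
    (h : ∀ i, (∀ j < i, x j = y j) → x i ≤ y i) : toLex x ≤ toLex y := by
  by_cases hxy : x = y
  · exact le_of_eq (congrArg toLex hxy)
  obtain ⟨i, hne, hmin⟩ := wellFounded_lt.has_min {i | x i ≠ y i} (Function.ne_iff.1 hxy)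
  have hagree : ∀ j < i, x j = y j := fun j hj => not_not.1 fun hj' => hmin j hj' hj
  exact le_of_lt ⟨i, hagree, (h i hagree).lt_of_ne hne⟩

noncomputable def lexSup (sup : ∀ i, Set (β i) → β i) (S : Set (Lex (∀ i, β i))) : ∀ i, β i :=
  wellFounded_lt.fix fun i rec =>
    sup i {a | ∃ g ∈ S, (∀ j (hj : j < i), ofLex g j = rec j hj) ∧ ofLex g i = a}

theorem lexSup_apply (sup : ∀ i, Set (β i) → β i) (S : Set (Lex (∀ i, β i))) (i : ι) :
    lexSup sup S i =
      sup i {a | ∃ g ∈ S, (∀ j < i, ofLex g j = lexSup sup S j) ∧ ofLex g i = a} :=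
  wellFounded_lt.fix_eq _ i

variable [∀ i, LinearOrder (β i)]

theorem isLUB_toLex_lexSup (sup : ∀ i, Set (β i) → β i) (hsup : ∀ i T, IsLUB T (sup i T))
    (S : Set (Lex (∀ i, β i))) : IsLUB S (toLex (lexSup sup S)) := by
  refine ⟨fun g hg => toLex_le_toLex_of_forall (x := ofLex g) fun i hagree => ?_,
    fun b hb => toLex_le_toLex_of_forall (y := ofLex b) fun i hagree => ?_⟩
  · rw [lexSup_apply]
    exact (hsup i _).1 ⟨g, hg, hagree, rfl⟩
  · rw [lexSup_apply]
    refine (hsup i _).2 ?_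
    rintro _ ⟨g, hg, hgagree, rfl⟩
    exact apply_le_of_toLex (hb hg) fun j hj => (hgagree j hj).trans (hagree j hj)

end Pi.Lex

theorem compactLine_lex_pi {ι : Type*} {β : ι → Type*} [LinearOrder ι] [WellFoundedLT ι]
    [∀ i, LinearOrder (β i)] (h : ∀ i, CompactLine (β i)) : CompactLine (Lex (∀ i, β i)) := by
  choose sup hsup using fun i (T : Set (β i)) => (h i T).1
  exact fun S => ⟨⟨_, Pi.Lex.isLUB_toLex_lexSup sup hsup S⟩,
    ⟨_, isLUB_lowerBounds.1 (Pi.Lex.isLUB_toLex_lexSup sup hsup (lowerBounds S))⟩⟩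

theorem stmt5 (L : Type) [LinearOrder L] (hL : CompactLine L) (α : Ordinal) :
    CompactLine (Lex (α.ToType → L)) ∧
    (DenselyOrdered L → DenselyOrdered (Lex (α.ToType → L))) :=
  ⟨compactLine_lex_pi fun _ => hL, fun _ => inferInstance⟩
end

section
/- The linear order L^{ω₁} = {x ∈ [-1,1]^{ω₁} : the set of α with x(α) ≠ 0 is countable}, with the lexicographic order, is countably saturated. -/
open Ordinal

/-- Countable saturation of a linear order. -/
def CSat (L : Type*) [LinearOrder L] : Prop :=
  DenselyOrdered L ∧ NoMinOrder L ∧ NoMaxOrder L ∧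
  (∀ x : ℕ → L, StrictMono x → ∀ s, ¬ IsLUB (Set.range x) s) ∧
  (∀ y : ℕ → L, StrictAnti y → ∀ s, ¬ IsGLB (Set.range y) s) ∧
  (∀ x y : ℕ → L, StrictMono x → StrictAnti y → (∀ n, x n < y n) →
    ∃ z, ∀ n, x n < z ∧ z < y n)

/-- The zero element of `[-1,1]`. -/
def zeroI : Set.Icc (-1 : ℝ) 1 := ⟨0, by norm_num⟩

/-!
Countably many points of the lexicographic power all vanish from some common `γ < ω₁` on.
Changing a point `s` at such a `γ` moves it up or down by an amount that none of the given
points can detect, since each of them is compared with `s` below `γ`; this gives density, the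
absence of endpoints and of countable suprema and infima. For an `(ω, ω)`-gap, the lexicographic
power of a complete linear order over a well-order is itself complete (its suprema are built
coordinatewise by well-founded recursion), and the supremum of the lower sequence, cut off at
`γ`, lies between the two sequences and has countable support.
-/

open Cardinal Set Function

namespace Pi

variable {ι α : Type*} [LinearOrder ι]

section LinearOrder

variable [LinearOrder α]

theorem toLex_lt_of_eqOn_Iio {f g f' g' : ι → α} {γ : ι}
    (h : toLex f < toLex g) (hfg : EqOn f g (Ici γ)) (hf : EqOn f f' (Iio γ))
    (hg : EqOn g g' (Iio γ)) : toLex f' < toLex g' := by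
  obtain ⟨i, hlt, hi⟩ := h
  have hiγ : i < γ := not_le.1 fun hγi => hi.ne (hfg hγi)
  refine ⟨i, fun j hj => ?_, ?_⟩
  · have hjγ : j < γ := hj.trans hiγ
    exact (hf hjγ).symm.trans ((hlt j hj).trans (hg hjγ))
  · show f' i < g' i
    rw [← hf hiγ, ← hg hiγ]
    exact hi

theorem toLex_le_of_eqOn_Iio [WellFoundedLT ι] {f g f' g' : ι → α} {γ : ι}
    (h : toLex f ≤ toLex g) (hfg : EqOn f' g' (Ici γ)) (hf : EqOn f f' (Iio γ))
    (hg : EqOn g g' (Iio γ)) : toLex f' ≤ toLex g' :=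
  not_lt.1 fun h' => h.not_gt (toLex_lt_of_eqOn_Iio h' hfg.symm hg.symm hf.symm)

end LinearOrder

variable [WellFoundedLT ι] [CompleteLinearOrder α]

noncomputable def lexSup (S : Set (Lex (ι → α))) : ι → α :=
  wellFounded_lt.fix fun i z =>
    sSup {ofLex x i | (x ∈ S) (_ : ∀ j (hj : j < i), ofLex x j = z j hj)}

theorem lexSup_apply (S : Set (Lex (ι → α))) (i : ι) :
    lexSup S i = sSup {ofLex x i | (x ∈ S) (_ : ∀ j < i, ofLex x j = lexSup S j)} :=
  wellFounded_lt.fix_eq _ i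

theorem isLUB_toLex_lexSup (S : Set (Lex (ι → α))) : IsLUB S (toLex (lexSup S)) := by
  refine ⟨fun x hx => not_lt.1 fun ⟨i, hlt, hi⟩ => ?_,
    fun u hu => not_lt.1 fun ⟨i, hlt, hi⟩ => ?_⟩
  · refine hi.not_ge ?_
    rw [toLex_apply, lexSup_apply]
    exact le_sSup ⟨x, hx, fun j hj => (hlt j hj).symm, rfl⟩
  · rw [toLex_apply, lexSup_apply, lt_sSup_iff] at hi
    obtain ⟨_, ⟨x, hx, hxz, rfl⟩, hux⟩ := hi
    exact (hu hx).not_gt ⟨i, fun j hj => (hlt j hj).trans (hxz j hj).symm, hux⟩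

end Pi

namespace Ordinal

theorem exists_gt_of_countable_omega_one {S : Set (ω_ 1).ToType} (hS : S.Countable) :
    ∃ γ, ∀ i ∈ S, i < γ := by
  have : ¬ IsCofinal S := fun h => by
    have := (Order.cof_le h).trans (le_aleph0_iff_set_countable.2 hS)
    rw [cof_toType, cof_omega_one] at this
    exact this.not_gt aleph0_lt_aleph_one
  simpa [IsCofinal] using this

theorem countable_Iio_omega_one (γ : (ω_ 1).ToType) : (Iio γ).Countable :=
  le_aleph0_iff_set_countable.1 <| lt_aleph_one_iff.1 <| by simpa using mk_Iio_lt γ (by simp)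

end Ordinal

abbrev CountableSupportLex (α : Type*) [LinearOrder α] (o : α) : Type _ :=
  {x : Lex ((ω_ 1).ToType → α) // {i | ofLex x i ≠ o}.Countable}

namespace CountableSupportLex

section LinearOrder

variable {α : Type*} [LinearOrder α] {o : α}

theorem exists_support_subset_Iio {S : Set (CountableSupportLex α o)} (hS : S.Countable) :
    ∃ γ : (ω_ 1).ToType, ∀ x ∈ S, ∀ i, γ ≤ i → ofLex x.1 i = o := by
  obtain ⟨γ, hγ⟩ := exists_gt_of_countable_omega_one (hS.biUnion fun x _ => x.2)
  exact ⟨γ, fun x hx i hi => not_not.1 fun h => (hγ i (mem_biUnion (x := x) hx h)).not_ge hi⟩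

noncomputable def update (s : CountableSupportLex α o) (γ : (ω_ 1).ToType) (a : α) :
    CountableSupportLex α o :=
  ⟨toLex (Function.update (ofLex s.1) γ a), (s.2.union (countable_singleton γ)).mono fun i hi => by
    by_cases h : i = γ
    · exact Or.inr h
    · exact Or.inl (by simpa [Function.update_of_ne h] using hi)⟩

theorem exists_update_preserving_comparisons {S : Set (CountableSupportLex α o)}
    (hS : S.Countable) (s : CountableSupportLex α o) :
    ∃ γ, ofLex s.1 γ = o ∧ ∀ a, ∀ t ∈ S,
      (t < s → t < s.update γ a) ∧ (s < t → s.update γ a < t) := by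
  obtain ⟨γ, hγ⟩ := exists_support_subset_Iio (hS.insert s)
  have hagree : ∀ t ∈ S, EqOn (ofLex t.1) (ofLex s.1) (Ici γ) := fun t ht i hi =>
    (hγ t (mem_insert_of_mem s ht) i hi).trans (hγ s (mem_insert s S) i hi).symm
  have hupdate : ∀ a, EqOn (ofLex s.1) (Function.update (ofLex s.1) γ a) (Iio γ) :=
    fun a i hi => (Function.update_of_ne hi.ne _ _).symm
  refine ⟨γ, hγ s (mem_insert s S) γ le_rfl, fun a t ht => ⟨fun h => ?_, fun h => ?_⟩⟩
  · exact Pi.toLex_lt_of_eqOn_Iio h (hagree t ht) (fun _ _ => rfl) (hupdate a)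
  · exact Pi.toLex_lt_of_eqOn_Iio h (hagree t ht).symm (hupdate a) (fun _ _ => rfl)

theorem exists_lt_of_countable (ho : ¬ IsMin o) {S : Set (CountableSupportLex α o)}
    (hS : S.Countable) (s : CountableSupportLex α o) : ∃ s' < s, ∀ t ∈ S, t < s → t < s' := by
  obtain ⟨a, ha⟩ := not_isMin_iff.1 ho
  obtain ⟨γ, hγ, h⟩ := exists_update_preserving_comparisons hS s
  exact ⟨s.update γ a, (Pi.toLex_update_lt_self_iff (x := ofLex s.1)).2 (by rwa [hγ]),
    fun t ht => (h a t ht).1⟩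

theorem exists_gt_of_countable (ho : ¬ IsMax o) {S : Set (CountableSupportLex α o)}
    (hS : S.Countable) (s : CountableSupportLex α o) : ∃ s' > s, ∀ t ∈ S, s < t → s' < t := by
  obtain ⟨a, ha⟩ := not_isMax_iff.1 ho
  obtain ⟨γ, hγ, h⟩ := exists_update_preserving_comparisons hS s
  exact ⟨s.update γ a, (Pi.lt_toLex_update_self_iff (x := ofLex s.1)).2 (by rwa [hγ]),
    fun t ht => (h a t ht).2⟩

theorem denselyOrdered (ho : ¬ IsMax o) : DenselyOrdered (CountableSupportLex α o) where
  dense x y hxy :=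
    let ⟨z, hxz, hz⟩ := exists_gt_of_countable ho (countable_singleton y) x
    ⟨z, hxz, hz y rfl hxy⟩

theorem noMinOrder (ho : ¬ IsMin o) : NoMinOrder (CountableSupportLex α o) where
  exists_lt x := let ⟨y, hy, _⟩ := exists_lt_of_countable ho countable_empty x; ⟨y, hy⟩

theorem noMaxOrder (ho : ¬ IsMax o) : NoMaxOrder (CountableSupportLex α o) where
  exists_gt x := let ⟨y, hy, _⟩ := exists_gt_of_countable ho countable_empty x; ⟨y, hy⟩

theorem not_isLUB_range (ho : ¬ IsMin o) {x : ℕ → CountableSupportLex α o} (hx : StrictMono x)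
    (s : CountableSupportLex α o) : ¬ IsLUB (range x) s := fun hs => by
  obtain ⟨s', hs's, hs'⟩ := exists_lt_of_countable ho (countable_range x) s
  have hxs : ∀ n, x n < s := fun n => (hx n.lt_succ_self).trans_le (hs.1 (mem_range_self _))
  exact hs's.not_ge (hs.2 (forall_mem_range.2 fun n => (hs' _ (mem_range_self n) (hxs n)).le))

theorem not_isGLB_range (ho : ¬ IsMax o) {y : ℕ → CountableSupportLex α o} (hy : StrictAnti y)
    (s : CountableSupportLex α o) : ¬ IsGLB (range y) s := fun hs => by
  obtain ⟨s', hs's, hs'⟩ := exists_gt_of_countable ho (countable_range y) s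
  have hsy : ∀ n, s < y n := fun n => (hs.1 (mem_range_self _)).trans_lt (hy n.lt_succ_self)
  exact hs's.not_ge (hs.2 (forall_mem_range.2 fun n => (hs' _ (mem_range_self n) (hsy n)).le))

end LinearOrder

variable {α : Type*} [CompleteLinearOrder α] {o : α}

theorem exists_between_of_strictMono_of_strictAnti {x y : ℕ → CountableSupportLex α o}
    (hx : StrictMono x) (hy : StrictAnti y) (hxy : ∀ n, x n < y n) :
    ∃ z, ∀ n, x n < z ∧ z < y n := by
  have hcross : ∀ n m, x n < y m := fun n m =>
    (hx.monotone (le_max_left n m)).trans_lt ((hxy _).trans_le (hy.antitone (le_max_right n m)))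
  obtain ⟨γ, hγ⟩ := exists_support_subset_Iio ((countable_range x).union (countable_range y))
  have hsup := Pi.isLUB_toLex_lexSup (range fun n => (x n).1)
  let z : (ω_ 1).ToType → α := fun i => if i < γ then Pi.lexSup (range fun n => (x n).1) i else o
  have hz : EqOn (Pi.lexSup (range fun n => (x n).1)) z (Iio γ) := fun i hi => (if_pos hi).symm
  have hzo : ∀ i, γ ≤ i → z i = o := fun i hi => if_neg (not_lt.2 hi)
  let w : CountableSupportLex α o :=
    ⟨toLex z, (countable_Iio_omega_one γ).mono fun i hi => not_le.1 fun h => hi (hzo i h)⟩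
  have hxw : ∀ n, x n ≤ w := fun n => Pi.toLex_le_of_eqOn_Iio (hsup.1 ⟨n, rfl⟩)
    (fun i hi => (hγ _ (Or.inl ⟨n, rfl⟩) i hi).trans (hzo i hi).symm) (fun _ _ => rfl) hz
  have hwy : ∀ m, w ≤ y m := fun m => Pi.toLex_le_of_eqOn_Iio
    (hsup.2 (forall_mem_range.2 fun n => (hcross n m).le))
    (fun i hi => (hzo i hi).trans (hγ _ (Or.inr ⟨m, rfl⟩) i hi).symm) hz (fun _ _ => rfl)
  exact ⟨w, fun n => ⟨(hx n.lt_succ_self).trans_le (hxw _), (hwy _).trans_lt (hy n.lt_succ_self)⟩⟩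

theorem cSat (hmin : ¬ IsMin o) (hmax : ¬ IsMax o) : CSat (CountableSupportLex α o) :=
  ⟨denselyOrdered hmax, noMinOrder hmin, noMaxOrder hmax, fun _ hx => not_isLUB_range hmin hx,
    fun _ hy => not_isGLB_range hmax hy, fun _ _ => exists_between_of_strictMono_of_strictAnti⟩

end CountableSupportLex

/-- `𝕃^{ω₁}`: points of the lexicographic power `[-1,1]^{ω₁}` with countable support. -/
theorem stmt6 :
    CSat {x : Lex ((ω_ 1).ToType → Set.Icc (-1 : ℝ) 1) //
      {α | ofLex x α ≠ zeroI}.Countable} := by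
  have : Fact ((-1 : ℝ) ≤ 1) := ⟨by norm_num⟩
  refine CountableSupportLex.cSat (o := zeroI) ?_ ?_
  · exact not_isMin_iff.2 ⟨⊥, show (-1 : ℝ) < 0 by norm_num⟩
  · exact not_isMax_iff.2 ⟨⊤, show (0 : ℝ) < 1 by norm_num⟩
end

section
/- Let X be a countably saturated linear order, L a linear order of countable character, and E a separable linear order with a distinguished element e₀. Then every order-embedding i : L ≅ L × {e₀} → X extends to an order-embedding of the lexicographic product L × E into X. -/
/-- A linear order is separable if it has a countable dense subset
(dense in the order topology). -/
def SepOrder (E : Type*) [LinearOrder E] : Prop :=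
  ∃ D : Set E, D.Countable ∧ (letI := Preorder.topology E; Dense D)

/-!
Countable character gives, for each `l : L`, countable sets `P l < i l < Q l` in `X` (the images
of the sets that pin `l` down, together with a point between `i l` and the image of an immediate
neighbour of `l`) whose cuts are ordered like `L`. So it suffices to embed `E` into each such cut
with `e₀ ↦ i l`. A countable order-dense set `C ∋ e₀` of `E` embeds there by Cantor's
forth argument, since the cut is a dense order without endpoints by countable saturation. Every
other `e : E` then realises a gap of `C` whose image is again a countable gap of `X`, filled by
saturation; since `C` is order-dense, at most two points of `E` realise the same gap of `C`.
-/

open Set Filter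

theorem Set.Countable.exists_strictMono_cofinal {α : Type*} [LinearOrder α] {S : Set α}
    (hS : S.Countable) (hne : S.Nonempty) (hmax : ∀ s ∈ S, ∃ t ∈ S, s < t) :
    ∃ u : ℕ → α, StrictMono u ∧ (∀ n, u n ∈ S) ∧ ∀ s ∈ S, ∃ n, s ≤ u n := by
  have : Countable S := hS.to_subtype
  have : Nonempty S := hne.to_subtype
  have : NoMaxOrder S := ⟨fun s ↦ let ⟨t, ht, hst⟩ := hmax s s.2; ⟨⟨t, ht⟩, hst⟩⟩
  obtain ⟨v, hv⟩ := exists_seq_tendsto (atTop : Filter S)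
  obtain ⟨φ, hφ, hvφ⟩ := strictMono_subseq_of_tendsto_atTop hv
  refine ⟨fun n ↦ v (φ n), (Subtype.strictMono_coe _).comp hvφ, fun n ↦ (v (φ n)).2,
    fun s hs ↦ ?_⟩
  exact (tendsto_atTop.1 (hv.comp hφ.tendsto_atTop) ⟨s, hs⟩).exists

theorem Set.Countable.exists_strictAnti_coinitial {α : Type*} [LinearOrder α] {S : Set α}
    (hS : S.Countable) (hne : S.Nonempty) (hmin : ∀ s ∈ S, ∃ t ∈ S, t < s) :
    ∃ u : ℕ → α, StrictAnti u ∧ (∀ n, u n ∈ S) ∧ ∀ s ∈ S, ∃ n, u n ≤ s :=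
  Set.Countable.exists_strictMono_cofinal (α := αᵒᵈ) hS hne hmin

theorem SepOrder.exists_countable_inter_Ioo_nonempty {E : Type*} [LinearOrder E]
    (hE : SepOrder E) :
    ∃ D : Set E, D.Countable ∧ ∀ a b : E, (Ioo a b).Nonempty → (D ∩ Ioo a b).Nonempty := by
  let := Preorder.topology E
  have : OrderTopology E := ⟨rfl⟩
  obtain ⟨D, hDc, hDd⟩ := hE
  exact ⟨D, hDc, fun a b h ↦ inter_comm D _ ▸ hDd.inter_open_nonempty _ isOpen_Ioo h⟩

open Order Order.PartialIso in
/-- Cantor's forth construction, started from the partial isomorphism `{(a, b)}`. -/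
theorem Order.exists_orderEmbedding_apply_eq {α β : Type*} [LinearOrder α] [LinearOrder β]
    [Countable α] [DenselyOrdered β] [NoMinOrder β] [NoMaxOrder β] (a : α) (b : β) :
    ∃ f : α ↪o β, f a = b := by
  have : Nonempty β := ⟨b⟩
  cases nonempty_encodable α
  let I : Ideal (PartialIso α β) :=
    idealOfCofinals ⟨{(a, b)}, by simp⟩ (definedAtLeft β)
  let F a' := funOfIdeal a' I (cofinal_meets_idealOfCofinals _ _ a')
  have hF : ∀ a', ∀ g ∈ I, ∀ p ∈ g.val, cmp a' p.1 = cmp (F a').val p.2 := by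
    intro a' g hg p hp
    obtain ⟨f, hf, ha'⟩ := (F a').prop
    obtain ⟨m, -, fm, gm⟩ := I.directed _ hf _ hg
    exact m.prop (a', _) (fm ha') p (gm hp)
  refine ⟨OrderEmbedding.ofStrictMono (fun a' ↦ (F a').val) fun a₁ a₂ h ↦ ?_, ?_⟩
  · obtain ⟨g, hg, ha₂⟩ := (F a₂).prop
    exact (lt_iff_lt_of_cmp_eq_cmp (hF a₁ g hg _ ha₂)).mp h
  · have := hF a _ (mem_idealOfCofinals _ _) (a, b) (Finset.mem_singleton_self _)
    rw [cmp_self_eq_eq, eq_comm, cmp_eq_eq_iff] at this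
    exact this

def strictCut {X : Type*} [LinearOrder X] (A B : Set X) : Set X :=
  {x | (∀ a ∈ A, a < x) ∧ ∀ b ∈ B, x < b}

/-- As `C` is order-dense, at most two points outside `C` cut `C` in the same place; the lower
one is sent to `z` and the upper one to `z'`. -/
theorem exists_strictMono_extend_of_gap_pairs {E X : Type*} [LinearOrder E] [LinearOrder X]
    {C : Set E} (hCdense : ∀ a b : E, (Ioo a b).Nonempty → (C ∩ Ioo a b).Nonempty)
    (g : C → X) (hg : StrictMono g) (z z' : Set C → X)
    (hzz' : ∀ e ∉ C, z {c | (c : E) < e} < z' {c | (c : E) < e})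
    (hgz : ∀ e ∉ C, ∀ c : C, (c : E) < e → g c < z {c | (c : E) < e})
    (hz'g : ∀ e ∉ C, ∀ c : C, e < c → z' {c | (c : E) < e} < g c) :
    ∃ f : E → X, StrictMono f ∧ (∀ c : C, f c = g c) ∧
      ∀ e ∉ C, f e = z {c | (c : E) < e} ∨ f e = z' {c | (c : E) < e} := by
  classical
  let below : E → Set C := fun e ↦ {c | (c : E) < e}
  let IsLower : E → Prop := fun e ↦ ∃ e', e < e' ∧ below e' = below e
  let f : E → X := fun e ↦
    if h : e ∈ C then g ⟨e, h⟩ else if IsLower e then z (below e) else z' (below e)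
  have f_coe : ∀ c : C, f c = g c := fun c ↦ dif_pos c.2
  have f_mem : ∀ e ∉ C, z (below e) ≤ f e ∧ f e ≤ z' (below e) := by
    intro e he
    simp only [f, dif_neg he]
    split_ifs
    exacts [⟨le_rfl, (hzz' e he).le⟩, ⟨(hzz' e he).le, le_rfl⟩]
  have g_lt_f : ∀ (c : C) (e : E), (c : E) < e → g c < f e := by
    intro c e hce
    by_cases he : e ∈ C
    · exact (hg (show (c : E) < (⟨e, he⟩ : C) from hce)).trans_eq (f_coe ⟨e, he⟩).symm
    · exact (hgz e he c hce).trans_le (f_mem e he).1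
  have f_lt_g : ∀ (c : C) (e : E), e < c → f e < g c := by
    intro c e hec
    by_cases he : e ∈ C
    · exact (f_coe ⟨e, he⟩).trans_lt (hg (show ((⟨e, he⟩ : C) : E) < c from hec))
    · exact (f_mem e he).2.trans_lt (hz'g e he c hec)
  refine ⟨f, fun e e' hee' ↦ ?_, f_coe, fun e he ↦ ?_⟩
  · by_cases he : e ∈ C
    · exact (f_coe ⟨e, he⟩).trans_lt (g_lt_f ⟨e, he⟩ e' hee')
    by_cases he' : e' ∈ C
    · exact (f_lt_g ⟨e', he'⟩ e hee').trans_eq (f_coe ⟨e', he'⟩).symm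
    by_cases hsep : ∃ c : C, e < c ∧ (c : E) < e'
    · obtain ⟨c, hec, hce'⟩ := hsep
      exact (f_lt_g c e hec).trans (g_lt_f c e' hce')
    push Not at hsep
    have hbelow : below e' = below e := by
      ext c
      refine ⟨fun hce' ↦ ?_, fun hce ↦ hce.trans hee'⟩
      by_contra hce
      exact (hsep c ((not_lt.1 hce).lt_of_ne fun h ↦ he (h ▸ c.2))).not_gt hce'
    have hlower : IsLower e := ⟨e', hee', hbelow⟩
    have hupper : ¬ IsLower e' := by
      rintro ⟨e'', he'e'', hbelow'⟩
      obtain ⟨c, hcC, hec, hce''⟩ := hCdense e e'' ⟨e', hee', he'e''⟩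
      exact hec.not_gt (show (⟨c, hcC⟩ : C) ∈ below e from hbelow ▸ hbelow' ▸ hce'')
    simp only [f, dif_neg he, dif_neg he', if_pos hlower, if_neg hupper, hbelow]
    exact hzz' e he
  · by_cases h : IsLower e <;> simp [f, he, h, below]

namespace CSat

variable {X E : Type*} [LinearOrder X] [LinearOrder E]

theorem dual (hX : CSat X) : CSat Xᵒᵈ := by
  obtain ⟨hd, hmin, hmax, hlub, hglb, hgap⟩ := hX
  refine ⟨inferInstance, inferInstance, inferInstance, fun x hx s ↦ hglb x hx s,
    fun y hy s ↦ hlub y hy s, fun x y hx hy hxy ↦ ?_⟩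
  obtain ⟨z, hz⟩ := hgap y x hy hx hxy
  exact ⟨z, fun n ↦ (hz n).symm⟩

theorem exists_gt_forall_lt (hX : CSat X) {B : Set X} (hB : B.Countable) {w : X}
    (hw : ∀ b ∈ B, w < b) : ∃ z, w < z ∧ ∀ b ∈ B, z < b := by
  obtain ⟨hd, -, hmax, -, hglb, -⟩ := hX
  by_cases hmin : ∃ b₀ ∈ B, ∀ b ∈ B, b₀ ≤ b
  · obtain ⟨b₀, hb₀, hle⟩ := hmin
    obtain ⟨z, hwz, hzb₀⟩ := exists_between (hw b₀ hb₀)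
    exact ⟨z, hwz, fun b hb ↦ hzb₀.trans_le (hle b hb)⟩
  rcases B.eq_empty_or_nonempty with rfl | hne
  · obtain ⟨z, hz⟩ := exists_gt w
    exact ⟨z, hz, by simp⟩
  push Not at hmin
  obtain ⟨y, hy, hyB, hyle⟩ := hB.exists_strictAnti_coinitial hne hmin
  have hwy : w ∈ lowerBounds (range y) := by
    rintro _ ⟨n, rfl⟩
    exact (hw _ (hyB n)).le
  obtain ⟨z, hzy, hzw⟩ : ∃ z ∈ lowerBounds (range y), ¬ z ≤ w := by
    by_contra! h
    exact hglb y hy w ⟨hwy, h⟩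
  refine ⟨z, not_le.1 hzw, fun b hb ↦ ?_⟩
  obtain ⟨n, hn⟩ := hyle b hb
  exact (hzy ⟨n + 1, rfl⟩).trans_lt ((hy n.lt_succ_self).trans_le hn)

theorem exists_lt_forall_gt (hX : CSat X) {A : Set X} (hA : A.Countable) {w : X}
    (hw : ∀ a ∈ A, a < w) : ∃ z, z < w ∧ ∀ a ∈ A, a < z :=
  hX.dual.exists_gt_forall_lt (X := Xᵒᵈ) hA hw

theorem exists_between_of_countable (hX : CSat X) {A B : Set X} (hA : A.Countable)
    (hB : B.Countable) (hAB : ∀ a ∈ A, ∀ b ∈ B, a < b) (hA' : BddAbove A) (hB' : BddBelow B) :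
    ∃ z, (∀ a ∈ A, a < z) ∧ ∀ b ∈ B, z < b := by
  have : NoMinOrder X := hX.2.1
  have : NoMaxOrder X := hX.2.2.1
  rcases A.eq_empty_or_nonempty with rfl | hAne
  · obtain ⟨w, hw⟩ := hB'
    obtain ⟨z, hz⟩ := exists_lt w
    exact ⟨z, by simp, fun b hb ↦ hz.trans_le (hw hb)⟩
  rcases B.eq_empty_or_nonempty with rfl | hBne
  · obtain ⟨w, hw⟩ := hA'
    obtain ⟨z, hz⟩ := exists_gt w
    exact ⟨z, fun a ha ↦ (hw ha).trans_lt hz, by simp⟩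
  by_cases hmax : ∃ a₀ ∈ A, ∀ a ∈ A, a ≤ a₀
  · obtain ⟨a₀, ha₀, hle⟩ := hmax
    obtain ⟨z, ha₀z, hzB⟩ := hX.exists_gt_forall_lt hB (hAB a₀ ha₀)
    exact ⟨z, fun a ha ↦ (hle a ha).trans_lt ha₀z, hzB⟩
  by_cases hmin : ∃ b₀ ∈ B, ∀ b ∈ B, b₀ ≤ b
  · obtain ⟨b₀, hb₀, hle⟩ := hmin
    obtain ⟨z, hzb₀, hAz⟩ := hX.exists_lt_forall_gt hA (fun a ha ↦ hAB a ha b₀ hb₀)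
    exact ⟨z, hAz, fun b hb ↦ hzb₀.trans_le (hle b hb)⟩
  push Not at hmax hmin
  obtain ⟨x, hx, hxA, hxle⟩ := hA.exists_strictMono_cofinal hAne hmax
  obtain ⟨y, hy, hyB, hyle⟩ := hB.exists_strictAnti_coinitial hBne hmin
  obtain ⟨z, hz⟩ := hX.2.2.2.2.2 x y hx hy fun n ↦ hAB _ (hxA n) _ (hyB n)
  refine ⟨z, fun a ha ↦ ?_, fun b hb ↦ ?_⟩
  · obtain ⟨n, hn⟩ := hxle a ha
    exact hn.trans_lt (hz n).1
  · obtain ⟨n, hn⟩ := hyle b hb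
    exact (hz n).2.trans_le hn

theorem exists_strictMono_extend (hX : CSat X) {C : Set E} (hC : C.Countable)
    (hCdense : ∀ a b : E, (Ioo a b).Nonempty → (C ∩ Ioo a b).Nonempty)
    {P Q : Set X} (hP : P.Countable) (hQ : Q.Countable) (hPne : P.Nonempty) (hQne : Q.Nonempty)
    (hPQ : ∀ p ∈ P, ∀ q ∈ Q, p < q) (g : C → X) (hg : StrictMono g)
    (hgPQ : ∀ c, g c ∈ strictCut P Q) :
    ∃ f : E → X, StrictMono f ∧ (∀ c : C, f c = g c) ∧ ∀ e, f e ∈ strictCut P Q := by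
  have : Nonempty X := ⟨hPne.some⟩
  have : Countable C := hC.to_subtype
  let gap : Set C → Set X := fun s ↦ strictCut (P ∪ g '' s) (Q ∪ g '' sᶜ)
  let IsPair : Set C → X × X → Prop := fun s zz ↦ zz.1 < zz.2 ∧ zz.1 ∈ gap s ∧ zz.2 ∈ gap s
  have exists_pair : ∀ e ∉ C, ∃ zz, IsPair {c | (c : E) < e} zz := by
    intro e he
    have hlt : ∀ x ∈ P ∪ g '' {c | (c : E) < e}, ∀ y ∈ Q ∪ g '' {c | (c : E) < e}ᶜ, x < y := by
      rintro _ (hp | ⟨c, hc, rfl⟩) _ (hq | ⟨c', hc', rfl⟩)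
      · exact hPQ _ hp _ hq
      · exact (hgPQ c').1 _ hp
      · exact (hgPQ c).2 _ hq
      · exact hg (hc.trans_le (not_lt.1 hc'))
    have hcount : ∀ s : Set C, (g '' s).Countable := fun s ↦
      (countable_range g).mono (image_subset_range _ _)
    obtain ⟨q, hq⟩ := hQne
    obtain ⟨p, hp⟩ := hPne
    obtain ⟨z, hz⟩ := hX.exists_between_of_countable (hP.union (hcount _))
      (hQ.union (hcount _)) hlt
      ⟨q, fun x hx ↦ (hlt x hx q (Or.inl hq)).le⟩ ⟨p, fun y hy ↦ (hlt p (Or.inl hp) y hy).le⟩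
    obtain ⟨z', hzz', hz'⟩ := hX.exists_gt_forall_lt (hQ.union (hcount _)) hz.2
    exact ⟨(z, z'), hzz', hz, fun x hx ↦ (hz.1 x hx).trans hzz', hz'⟩
  let pair : Set C → X × X := fun s ↦ Classical.epsilon (IsPair s)
  have hpair : ∀ e ∉ C, IsPair {c | (c : E) < e} (pair {c | (c : E) < e}) := fun e he ↦
    Classical.epsilon_spec (exists_pair e he)
  obtain ⟨f, hf, hfg, hfpair⟩ := exists_strictMono_extend_of_gap_pairs hCdense g hg
    (fun s ↦ (pair s).1) (fun s ↦ (pair s).2) (fun e he ↦ (hpair e he).1)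
    (fun e he c hc ↦ (hpair e he).2.1.1 _ (Or.inr ⟨c, hc, rfl⟩))
    (fun e he c hc ↦ (hpair e he).2.2.2 _ (Or.inr ⟨c, not_lt.2 hc.le, rfl⟩))
  refine ⟨f, hf, hfg, fun e ↦ ?_⟩
  by_cases he : e ∈ C
  · exact hfg ⟨e, he⟩ ▸ hgPQ ⟨e, he⟩
  have hgap : f e ∈ gap {c | (c : E) < e} := by
    rcases hfpair e he with h | h <;> rw [h]
    exacts [(hpair e he).2.1, (hpair e he).2.2]
  exact ⟨fun p hp ↦ hgap.1 p (Or.inl hp), fun q hq ↦ hgap.2 q (Or.inl hq)⟩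

theorem exists_strictMono_apply_eq (hX : CSat X) (hE : SepOrder E) (e₀ : E) {P Q : Set X}
    (hP : P.Countable) (hQ : Q.Countable) {y₀ : X} (hy₀ : y₀ ∈ strictCut P Q) :
    ∃ f : E → X, StrictMono f ∧ f e₀ = y₀ ∧ ∀ e, f e ∈ strictCut P Q := by
  have : DenselyOrdered X := hX.1
  -- Adding `cm` and `cp` makes both sides of the cut nonempty, so every gap met later is bounded.
  obtain ⟨cm, hcmy₀, hPcm⟩ := hX.exists_lt_forall_gt hP hy₀.1
  obtain ⟨cp, hy₀cp, hcpQ⟩ := hX.exists_gt_forall_lt hQ hy₀.2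
  set T := strictCut (insert cm P) (insert cp Q)
  have hTsub : T ⊆ strictCut P Q := fun x hx ↦
    ⟨fun p hp ↦ hx.1 p (mem_insert_of_mem _ hp), fun q hq ↦ hx.2 q (mem_insert_of_mem _ hq)⟩
  have hy₀T : y₀ ∈ T := ⟨forall_mem_insert.2 ⟨hcmy₀, hy₀.1⟩, forall_mem_insert.2 ⟨hy₀cp, hy₀.2⟩⟩
  have : T.OrdConnected := ⟨fun x hx y hy z hz ↦
    ⟨fun a ha ↦ (hx.1 a ha).trans_le hz.1, fun b hb ↦ hz.2.trans_lt (hy.2 b hb)⟩⟩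
  have : NoMaxOrder T := ⟨fun x ↦
    let ⟨z, hxz, hzQ⟩ := hX.exists_gt_forall_lt (hQ.insert cp) x.2.2
    ⟨⟨z, fun p hp ↦ (x.2.1 p hp).trans hxz, hzQ⟩, hxz⟩⟩
  have : NoMinOrder T := ⟨fun x ↦
    let ⟨z, hzx, hPz⟩ := hX.exists_lt_forall_gt (hP.insert cm) x.2.1
    ⟨⟨z, hPz, fun q hq ↦ hzx.trans (x.2.2 q hq)⟩, hzx⟩⟩
  obtain ⟨D, hDc, hD⟩ := hE.exists_countable_inter_Ioo_nonempty
  have : Countable (insert e₀ D : Set E) := (hDc.insert e₀).to_subtype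
  obtain ⟨φ, hφ⟩ := Order.exists_orderEmbedding_apply_eq
    (⟨e₀, mem_insert _ _⟩ : (insert e₀ D : Set E)) (⟨y₀, hy₀T⟩ : T)
  obtain ⟨f, hf, hfφ, hfT⟩ := hX.exists_strictMono_extend (hDc.insert e₀)
    (fun a b h ↦ (hD a b h).mono (inter_subset_inter_left _ (subset_insert _ _)))
    (hP.insert cm) (hQ.insert cp) (insert_nonempty _ _) (insert_nonempty _ _)
    (fun p hp q hq ↦ (hy₀T.1 p hp).trans (hy₀T.2 q hq)) (fun c ↦ (φ c : X))
    ((Subtype.strictMono_coe _).comp φ.strictMono) (fun c ↦ (φ c).2)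
  exact ⟨f, hf, (hfφ _).trans (congrArg Subtype.val hφ), fun e ↦ hTsub (hfT e)⟩

end CSat

theorem CharLEOmega.exists_countable_cofinal {L : Type*} [LinearOrder L] (hL : CharLEOmega L)
    (l : L) : ∃ A B : Set L, A.Countable ∧ B.Countable ∧ (∀ a ∈ A, a < l) ∧ (∀ b ∈ B, l < b) ∧
      (∀ c < l, ∃ a ∈ A, c ≤ a) ∧ ∀ c > l, ∃ b ∈ B, b ≤ c := by
  obtain ⟨A, B, hA, hB, -, hAB⟩ := hL l
  have hl : l ∈ {x | (∀ a ∈ A, a < x) ∧ ∀ b ∈ B, x < b} := hAB ▸ mem_singleton l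
  have hout : ∀ c ≠ l, ¬ ((∀ a ∈ A, a < c) ∧ ∀ b ∈ B, c < b) := fun c hc h ↦
    hc (hAB ▸ h : c ∈ ({l} : Set L))
  refine ⟨A, B, hA, hB, hl.1, hl.2, fun c hc ↦ ?_, fun c hc ↦ ?_⟩
  · by_contra! h
    exact hout c hc.ne ⟨h, fun b hb ↦ hc.trans (hl.2 b hb)⟩
  · by_contra! h
    exact hout c hc.ne' ⟨fun a ha ↦ (hl.1 a ha).trans hc, h⟩

theorem CharLEOmega.exists_countable_cuts {L X : Type*} [LinearOrder L] [LinearOrder X]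
    [DenselyOrdered X] (hL : CharLEOmega L) (i : L ↪o X) :
    ∃ P Q : L → Set X, (∀ l, (P l).Countable) ∧ (∀ l, (Q l).Countable) ∧
      (∀ l, i l ∈ strictCut (P l) (Q l)) ∧ ∀ l l', l < l' →
        ∀ x ∈ strictCut (P l) (Q l), ∀ y ∈ strictCut (P l') (Q l'), x < y := by
  choose A B hA hB hAl hBl hAcof hBcof using hL.exists_countable_cofinal
  -- `m l c` keeps the cuts of `l ⋖ c` apart, where the sets from countable character cannot.
  choose m hm using fun l c : L ↦ show ∃ x, l < c → i l < x ∧ x < i c from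
    if h : l < c then (exists_between (i.strictMono h)).imp fun _ hx _ ↦ hx else ⟨i l, h.elim⟩
  refine ⟨fun l ↦ i '' A l ∪ (m · l) '' {c | c ⋖ l}, fun l ↦ i '' B l ∪ m l '' {c | l ⋖ c},
    fun l ↦ ((hA l).image _).union ?_, fun l ↦ ((hB l).image _).union ?_, fun l ↦ ⟨?_, ?_⟩, ?_⟩
  · exact (Subsingleton.image (fun c hc c' hc' ↦ CovBy.unique_left hc hc') _).countable
  · exact (Subsingleton.image (fun c hc c' hc' ↦ CovBy.unique_right hc hc') _).countable
  · rintro _ (⟨a, ha, rfl⟩ | ⟨c, hc, rfl⟩)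
    exacts [i.strictMono (hAl l a ha), (hm c l hc.lt).2]
  · rintro _ (⟨b, hb, rfl⟩ | ⟨c, hc, rfl⟩)
    exacts [i.strictMono (hBl l b hb), (hm l c hc.lt).1]
  intro l l' hll' x hx y hy
  by_cases hcov : l ⋖ l'
  · exact (hx.2 _ (Or.inr ⟨l', hcov, rfl⟩)).trans (hy.1 _ (Or.inr ⟨l, hcov, rfl⟩))
  obtain ⟨c, hlc, hcl'⟩ := (not_covBy_iff hll').1 hcov
  obtain ⟨b, hb, hbc⟩ := hBcof l c hlc
  obtain ⟨a, ha, hca⟩ := hAcof l' c hcl'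
  calc x < i b := hx.2 _ (Or.inl ⟨b, hb, rfl⟩)
    _ ≤ i a := i.le_iff_le.2 (hbc.trans hca)
    _ < y := hy.1 _ (Or.inl ⟨a, ha, rfl⟩)

theorem stmt8 (X L E : Type) [LinearOrder X] [LinearOrder L] [LinearOrder E]
    (hX : CSat X) (hL : CharLEOmega L) (hE : SepOrder E) (e₀ : E) (i : L ↪o X) :
    ∃ j : (L ×ₗ E) ↪o X, ∀ l : L, j (toLex (l, e₀)) = i l := by
  have : DenselyOrdered X := hX.1
  obtain ⟨P, Q, hP, hQ, hiPQ, hsep⟩ := hL.exists_countable_cuts i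
  choose f hf hfe₀ hfPQ using fun l ↦ hX.exists_strictMono_apply_eq hE e₀ (hP l) (hQ l) (hiPQ l)
  refine ⟨OrderEmbedding.ofStrictMono (fun p ↦ f (ofLex p).1 (ofLex p).2) ?_, hfe₀⟩
  rintro ⟨l, e⟩ ⟨l', e'⟩ h
  rcases Prod.Lex.toLex_lt_toLex.1 h with hll' | ⟨rfl, hee'⟩
  · exact hsep l l' hll' _ (hfPQ l e) _ (hfPQ l' e')
  · exact hf l hee'
end

section
/- For every countable ordinal α, the lexicographic power 2^α contains no order-embedded copy of ω₁ and no order-embedded copy of ω₁ reversed; consequently the same holds for [-1,1]^α, which therefore has countable character. -/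
/-!
If `g : ω₁ → 2^ι` is strictly increasing, let `d ξ` be the place where `g ξ` and `g (ξ + 1)` first
differ. As `ι` is countable, `d` takes a single value `k` on an uncountable set `S`. For `ξ < η` in
`S`, `g ξ` and `g η` already differ below `k`: both have a `0` at `k`, and agreeing up to `k` would
force `g η < g (ξ + 1)`. As `S` contains a copy of `ω₁`, this gives a copy of `ω₁` in `2^(<k)`,
which is ruled out by well-founded induction on `k`. Complementing all bits handles `ω₁*`, and
`[-1, 1]^α` embeds into `2^(α ×ₗ ℕ)` by sending each real to its Dedekind cut in an enumeration
of `ℚ`. Finally, if a point of a linear order had no countable cofinal set below it, transfinite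
recursion would build a copy of `ω₁` below it.
-/

open Ordinal

open Set

universe u

namespace Ordinal

theorem countable_Iio_omega_one_toType (x : (ω₁ : Ordinal.{u}).ToType) : (Iio x).Countable := by
  have hlt := Cardinal.mk_Iio_lt x <| by
    rw [Cardinal.mk_toType, card_omega, Cardinal.ord_aleph, type_toType]
  rw [Cardinal.mk_toType, card_omega] at hlt
  exact Cardinal.le_aleph0_iff_set_countable.1 (Cardinal.lt_aleph_one_iff.1 hlt)

instance : Uncountable (ω₁ : Ordinal.{u}).ToType := by
  rw [← Cardinal.aleph0_lt_mk_iff, Cardinal.mk_toType, card_omega]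
  exact Cardinal.aleph0_lt_aleph_one

instance : NoMaxOrder (ω₁ : Ordinal.{u}).ToType where
  exists_gt x := by
    by_contra! hmax
    have : (Set.univ : Set (ω₁ : Ordinal.{u}).ToType) ⊆ insert x (Iio x) :=
      fun y _ ↦ (hmax y).eq_or_lt
    exact not_countable_univ (((countable_Iio_omega_one_toType x).insert x).mono this)

theorem exists_strictMono_omega_one_toType {M : Type*} [Preorder M]
    (h : ∀ s : Set M, s.Countable → ∃ x, ∀ a ∈ s, a < x) :
    ∃ g : (ω₁ : Ordinal.{u}).ToType → M, StrictMono g := by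
  choose ub hub using h
  have (x : (ω₁ : Ordinal.{u}).ToType) : Countable (Iio x) :=
    (countable_Iio_omega_one_toType x).to_subtype
  let g : (ω₁ : Ordinal.{u}).ToType → M := wellFounded_lt.fix fun x rec ↦
    ub (range fun y : Iio x ↦ rec y.1 y.2) (countable_range _)
  refine ⟨g, fun y x hyx ↦ ?_⟩
  rw [show g x = _ from wellFounded_lt.fix_eq _ x]
  exact hub _ _ _ ⟨⟨y, hyx⟩, rfl⟩

theorem exists_strictMono_omega_one_toType_mem {S : Set (ω₁ : Ordinal.{u}).ToType}
    (hS : ¬ S.Countable) : ∃ g : (ω₁ : Ordinal.{u}).ToType → S, StrictMono g := by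
  refine exists_strictMono_omega_one_toType fun s hs ↦ ?_
  have hcount : (⋃ a ∈ s, Iic (a : (ω₁ : Ordinal.{u}).ToType)).Countable :=
    hs.biUnion fun a _ ↦ by
      rw [← Iio_insert]
      exact (countable_Iio_omega_one_toType _).insert _
  obtain ⟨x, hxS, hx⟩ := not_subset.1 fun hsub ↦ hS (hcount.mono hsub)
  simp only [mem_iUnion, mem_Iic, not_exists, not_le] at hx
  exact ⟨⟨x, hxS⟩, fun a ha ↦ hx a ha⟩

end Ordinal

theorem exists_not_countable_preimage_singleton {α ι : Type*} [Uncountable α] [Countable ι]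
    (d : α → ι) : ∃ i, ¬ (d ⁻¹' {i}).Countable := by
  by_contra! h
  apply not_countable_univ (α := α)
  rw [← preimage_univ (f := d), ← iUnion_of_singleton, preimage_iUnion]
  exact countable_iUnion h

section LexLtAt

variable {ι β : Type*} [LinearOrder ι] [PartialOrder β]

def LexLtAt (i : ι) (x y : ι → β) : Prop :=
  (∀ j < i, x j = y j) ∧ x i < y i

theorem LexLtAt.toLex_lt {i : ι} {x y : ι → β} (h : LexLtAt i x y) : toLex x < toLex y :=
  ⟨i, h⟩

theorem toLex_lt_toLex_iff_exists_lexLtAt {x y : ι → β} :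
    toLex x < toLex y ↔ ∃ i, LexLtAt i x y :=
  Iff.rfl

theorem LexLtAt.lt_of_toLex_le {i k : ι} {a b c : ι → β} (hab : LexLtAt k a b)
    (hbc : toLex b ≤ toLex c) (hck : c k ≤ a k) (hac : LexLtAt i a c) : i < k := by
  rcases lt_trichotomy i k with hik | rfl | hki
  · exact hik
  · exact absurd hac.2 hck.not_gt
  · have hcb : LexLtAt k c b :=
      ⟨fun j hj ↦ (hac.1 j (hj.trans hki)).symm.trans (hab.1 j hj), hck.trans_lt hab.2⟩
    exact absurd hcb.toLex_lt hbc.not_gt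

end LexLtAt

section LexIncreasing

variable {α ι β : Type*} [Preorder α] [LinearOrder ι] [PartialOrder β]

def LexIncreasingWithin (I : Set ι) (g : α → ι → β) : Prop :=
  ∀ ⦃a b⦄, a < b → ∃ i ∈ I, LexLtAt i (g a) (g b)

theorem LexIncreasingWithin.strictMono {I : Set ι} {g : α → ι → β}
    (hg : LexIncreasingWithin I g) : StrictMono (toLex ∘ g) := fun _ _ hab ↦
  let ⟨_, _, h⟩ := hg hab
  h.toLex_lt

theorem lexIncreasingWithin_univ {g : α → ι → β} (hg : StrictMono (toLex ∘ g)) :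
    LexIncreasingWithin univ g := fun _ _ hab ↦
  let ⟨i, hi⟩ := toLex_lt_toLex_iff_exists_lexLtAt.1 (hg hab)
  ⟨i, mem_univ i, hi⟩

theorem LexIncreasingWithin.exists_Iio [Countable ι] {I : Set ι}
    {g : (ω₁ : Ordinal.{u}).ToType → ι → Bool} (hg : LexIncreasingWithin I g) :
    ∃ k ∈ I, ∃ g' : (ω₁ : Ordinal.{u}).ToType → ι → Bool, LexIncreasingWithin (Iio k) g' := by
  choose d hdI hd using fun ξ ↦ hg (Order.lt_succ ξ)
  obtain ⟨k, hk⟩ := exists_not_countable_preimage_singleton d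
  obtain ⟨h, hh⟩ := exists_strictMono_omega_one_toType_mem hk
  have hd_eq (ζ) : d (h ζ) = k := (h ζ).2
  refine ⟨k, hd_eq (Classical.arbitrary _) ▸ hdI _, fun ξ ↦ g (h ξ), fun ξ η hξη ↦ ?_⟩
  have hfalse (ζ) : g (h ζ) k = false := by
    simpa [hd_eq] using (Bool.lt_iff.1 (hd (h ζ)).2).1
  obtain ⟨i, -, hi⟩ := hg (hh hξη)
  refine ⟨i, ?_, hi⟩
  refine (hd_eq ξ ▸ hd (h ξ)).lt_of_toLex_le ?_ ((hfalse η).trans (hfalse ξ).symm).le hi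
  exact hg.strictMono.monotone (Order.succ_le_of_lt (hh hξη))

theorem not_lexIncreasingWithin_Iio [WellFoundedLT ι] [Countable ι] (k : ι)
    (g : (ω₁ : Ordinal.{u}).ToType → ι → Bool) : ¬ LexIncreasingWithin (Iio k) g := by
  induction k using WellFoundedLT.induction generalizing g with
  | ind k ih =>
    intro hg
    obtain ⟨k', hk', g', hg'⟩ := hg.exists_Iio
    exact ih k' hk' g' hg'

theorem isEmpty_omega_one_toType_orderEmbedding_lex_bool [WellFoundedLT ι] [Countable ι] :
    IsEmpty ((ω₁ : Ordinal.{u}).ToType ↪o Lex (ι → Bool)) := by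
  refine ⟨fun f ↦ ?_⟩
  obtain ⟨k, -, g, hg⟩ := (lexIncreasingWithin_univ (g := ofLex ∘ f) f.strictMono).exists_Iio
  exact not_lexIncreasingWithin_Iio k g hg

end LexIncreasing

namespace Pi.Lex

variable {ι κ β γ : Type*} [LinearOrder ι] [PartialOrder β] [PartialOrder γ]

theorem strictMono_comp {φ : β → γ} (hφ : StrictMono φ) :
    StrictMono fun x : Lex (ι → β) ↦ toLex (φ ∘ ofLex x) := fun _ _ ⟨i, hagree, hi⟩ ↦
  ⟨i, fun j hj ↦ congrArg φ (hagree j hj), hφ hi⟩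

theorem strictAnti_comp {φ : β → γ} (hφ : StrictAnti φ) :
    StrictAnti fun x : Lex (ι → β) ↦ toLex (φ ∘ ofLex x) := fun _ _ ⟨i, hagree, hi⟩ ↦
  ⟨i, fun j hj ↦ congrArg φ (hagree j hj).symm, hφ hi⟩

theorem strictMono_uncurry [LinearOrder κ] :
    StrictMono fun x : Lex (ι → Lex (κ → β)) ↦
      toLex fun p : ι ×ₗ κ ↦ ofLex (ofLex x (ofLex p).1) (ofLex p).2 := by
  rintro x y ⟨i, hagree, n, hagree', hn⟩
  refine ⟨toLex (i, n), fun p hp ↦ ?_, hn⟩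
  rcases Prod.Lex.lt_iff.1 hp with hpi | ⟨hpi, hpn⟩
  · exact congrArg (fun z : Lex (κ → β) ↦ ofLex z (ofLex p).2) (hagree _ hpi)
  · change ofLex (ofLex x (ofLex p).1) (ofLex p).2 = ofLex (ofLex y (ofLex p).1) (ofLex p).2
    rw [show (ofLex p).1 = i from hpi]
    exact hagree' _ hpn

end Pi.Lex

theorem isEmpty_omega_one_toType_dual_orderEmbedding_lex_bool {ι : Type*} [LinearOrder ι]
    [WellFoundedLT ι] [Countable ι] :
    IsEmpty ((ω₁ : Ordinal.{u}).ToTypeᵒᵈ ↪o Lex (ι → Bool)) := by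
  refine ⟨fun f ↦ (isEmpty_omega_one_toType_orderEmbedding_lex_bool (ι := ι)).false
    (.ofStrictMono (fun ξ ↦ toLex (compl ∘ ofLex (f (OrderDual.toDual ξ)))) ?_)⟩
  exact (Pi.Lex.strictAnti_comp (compl_strictAnti Bool)).comp
    (f.strictMono.comp_strictAnti fun _ _ h ↦ OrderDual.toDual_lt_toDual.2 h)

instance {α β : Type*} [Countable α] [Countable β] : Countable (α ×ₗ β) :=
  inferInstanceAs (Countable (α × β))

theorem Real.exists_strictMono_lex_nat_bool : ∃ e : ℝ → Lex (ℕ → Bool), StrictMono e := by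
  obtain ⟨q, hq⟩ := exists_surjective_nat ℚ
  refine ⟨fun x ↦ toLex fun n ↦ decide ((q n : ℝ) < x), Pi.toLex_strictMono.comp fun x y hxy ↦ ?_⟩
  refine lt_of_le_of_ne (fun n ↦ ?_) fun heq ↦ ?_
  · exact Bool.le_iff_imp.2 fun h ↦ decide_eq_true ((of_decide_eq_true h).trans hxy)
  · obtain ⟨r, hxr, hry⟩ := exists_rat_btwn hxy
    obtain ⟨n, rfl⟩ := hq r
    simpa [hxr.not_gt, hry] using congrFun heq n

theorem nonempty_orderEmbedding_lex_real_lex_prod_nat_bool (ι : Type*) [LinearOrder ι]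
    [WellFoundedLT ι] (s : Set ℝ) : Nonempty (Lex (ι → s) ↪o Lex (ι ×ₗ ℕ → Bool)) :=
  let ⟨_, he⟩ := Real.exists_strictMono_lex_nat_bool
  ⟨.ofStrictMono _ (Pi.Lex.strictMono_uncurry.comp
    (Pi.Lex.strictMono_comp (he.comp (Subtype.strictMono_coe _))))⟩

section RealValued

variable {ι : Type*} [LinearOrder ι] [WellFoundedLT ι] [Countable ι]

theorem isEmpty_omega_one_toType_orderEmbedding_lex_real (s : Set ℝ) :
    IsEmpty ((ω₁ : Ordinal.{u}).ToType ↪o Lex (ι → s)) :=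
  let ⟨F⟩ := nonempty_orderEmbedding_lex_real_lex_prod_nat_bool ι s
  ⟨fun f ↦ isEmpty_omega_one_toType_orderEmbedding_lex_bool.false (f.trans F)⟩

theorem isEmpty_omega_one_toType_dual_orderEmbedding_lex_real (s : Set ℝ) :
    IsEmpty ((ω₁ : Ordinal.{u}).ToTypeᵒᵈ ↪o Lex (ι → s)) :=
  let ⟨F⟩ := nonempty_orderEmbedding_lex_real_lex_prod_nat_bool ι s
  ⟨fun f ↦ isEmpty_omega_one_toType_dual_orderEmbedding_lex_bool.false (f.trans F)⟩

end RealValued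

theorem exists_countable_subset_Iio_forall_le {L : Type*} [LinearOrder L]
    (h : IsEmpty ((ω₁ : Ordinal.{u}).ToType ↪o L)) (l : L) :
    ∃ A : Set L, A.Countable ∧ A ⊆ Iio l ∧ ∀ x < l, ∃ a ∈ A, x ≤ a := by
  by_contra! hcon
  obtain ⟨g, hg⟩ := exists_strictMono_omega_one_toType (M := Iio l) fun s hs ↦ by
    obtain ⟨x, hxl, hx⟩ := hcon (Subtype.val '' s) (hs.image _) (image_subset_iff.2 fun a _ ↦ a.2)
    exact ⟨⟨x, hxl⟩, fun a ha ↦ hx a ⟨a, ha, rfl⟩⟩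
  exact h.false (OrderEmbedding.ofStrictMono _ ((Subtype.strictMono_coe _).comp hg))

theorem charLEOmega_of_isEmpty_orderEmbedding {L : Type*} [LinearOrder L]
    (h : IsEmpty ((ω₁ : Ordinal.{u}).ToType ↪o L))
    (h' : IsEmpty ((ω₁ : Ordinal.{u}).ToTypeᵒᵈ ↪o L)) : CharLEOmega L := by
  intro l
  have h'' : IsEmpty ((ω₁ : Ordinal.{u}).ToType ↪o Lᵒᵈ) :=
    ⟨fun f ↦ h'.false (f.dual.trans (OrderIso.dualDual L).symm.toOrderEmbedding)⟩
  obtain ⟨A, hA, hAl, hAcof⟩ := exists_countable_subset_Iio_forall_le h l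
  obtain ⟨B, hB, hBl, hBcof⟩ := exists_countable_subset_Iio_forall_le h'' (OrderDual.toDual l)
  refine ⟨A, OrderDual.toDual ⁻¹' B, hA, hB.preimage OrderDual.toDual.injective,
    fun a ha b hb ↦ (hAl ha).trans (hBl hb), eq_singleton_iff_unique_mem.2
      ⟨⟨fun a ha ↦ hAl ha, fun b hb ↦ hBl hb⟩, fun x ⟨hxA, hxB⟩ ↦ ?_⟩⟩
  rcases lt_trichotomy x l with hxl | hxl | hlx
  · obtain ⟨a, ha, hxa⟩ := hAcof x hxl
    exact absurd (hxA a ha) hxa.not_gt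
  · exact hxl
  · obtain ⟨b, hb, hbx⟩ := hBcof (OrderDual.toDual x) hlx
    exact absurd (hxB _ hb) hbx.not_gt

theorem stmt9 (α : Ordinal) (hα : α.card ≤ Cardinal.aleph0) :
    IsEmpty ((ω_ 1).ToType ↪o Lex (α.ToType → Bool)) ∧
    IsEmpty (((ω_ 1).ToType)ᵒᵈ ↪o Lex (α.ToType → Bool)) ∧
    IsEmpty ((ω_ 1).ToType ↪o Lex (α.ToType → Set.Icc (-1 : ℝ) 1)) ∧
    IsEmpty (((ω_ 1).ToType)ᵒᵈ ↪o Lex (α.ToType → Set.Icc (-1 : ℝ) 1)) ∧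
    CharLEOmega (Lex (α.ToType → Set.Icc (-1 : ℝ) 1)) := by
  have : Countable α.ToType := Cardinal.mk_le_aleph0_iff.1 (by rwa [Cardinal.mk_toType])
  exact ⟨isEmpty_omega_one_toType_orderEmbedding_lex_bool,
    isEmpty_omega_one_toType_dual_orderEmbedding_lex_bool,
    isEmpty_omega_one_toType_orderEmbedding_lex_real _,
    isEmpty_omega_one_toType_dual_orderEmbedding_lex_real _,
    charLEOmega_of_isEmpty_orderEmbedding
      (isEmpty_omega_one_toType_orderEmbedding_lex_real.{0} _)
      (isEmpty_omega_one_toType_dual_orderEmbedding_lex_real _)⟩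
end

section
/- Let X be a linearly ordered continuum and let 𝒜 be a pairwise disjoint family of closed intervals of X, each containing more than one point, with the induced linear order (I ≤ J iff max I < min J). Then X does not order-embed into 𝒜. -/
/-- A linearly ordered continuum `X` does not order-embed into any pairwise disjoint
family `𝒜` of nondegenerate closed intervals of `X`, ordered by `I < J ↔ max I < min J`
(equivalently, every element of `I` is below every element of `J`). -/
theorem stmt12 (X : Type) [LinearOrder X] (hX : CompactLine X)
    (hdense : DenselyOrdered X) (𝒜 : Set (Set X))
    (hint : ∀ I ∈ 𝒜, ∃ a b : X, a < b ∧ I = Set.Icc a b)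
    (hdisj : 𝒜.PairwiseDisjoint id) :
    ¬ ∃ f : X → Set X, (∀ x, f x ∈ 𝒜) ∧
      ∀ x y : X, x < y → ∀ u ∈ f x, ∀ v ∈ f y, u < v := by
  rintro ⟨f, hf, hmono⟩
  choose a b hab hIcc using fun x => hint (f x) (hf x)
  have ha : ∀ x, a x ∈ f x := fun x => by
    rw [hIcc x]; exact ⟨le_rfl, (hab x).le⟩
  have hb : ∀ x, b x ∈ f x := fun x => by
    rw [hIcc x]; exact ⟨(hab x).le, le_rfl⟩
  set S : Set X := {x : X | x ≤ a x} with hSdef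
  obtain ⟨s, hs⟩ := (hX S).1
  by_cases hcase : s ≤ a s
  · rcases lt_or_eq_of_le hcase with hlt | heq
    · -- s < a s : pick z strictly between
      obtain ⟨z, hsz, hza⟩ := exists_between hlt
      have hzS : z ∉ S := fun h => absurd (hs.1 h) (not_le.mpr hsz)
      have h1 : a z < z := not_le.mp hzS
      have h2 : a s < a z := hmono s z hsz (a s) (ha s) (a z) (ha z)
      exact absurd (h1.trans (hza.trans h2)) (lt_irrefl _)
    · -- s = a s : pick z between s and b s
      obtain ⟨z, hsz, hzb⟩ := exists_between (lt_of_le_of_lt hcase (hab s))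
      have hzS : z ∉ S := fun h => absurd (hs.1 h) (not_le.mpr hsz)
      have h1 : a z < z := not_le.mp hzS
      have h2 : b s < a z := hmono s z hsz (b s) (hb s) (a z) (ha z)
      exact absurd (h1.trans (hzb.trans h2)) (lt_irrefl _)
  · -- a s < s : then a s is an upper bound of S, contradicting s = sup S
    have hub : a s ∈ upperBounds S := by
      intro x hx
      have hxs : x < s := lt_of_le_of_ne (hs.1 hx) (fun h => hcase (h ▸ hx))
      exact le_of_lt (lt_of_le_of_lt hx (hmono x s hxs (a x) (ha x) (a s) (ha s)))
    exact hcase (hs.2 hub)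
end

section
/- For every linearly ordered continuum L and every ordinal α, the least ordinal β such that the lexicographic power L^α embeds into L^β is exactly α; i.e., L-dim(L^α) = α. -/
open Function

section LexSup

variable {L ι : Type*} [LinearOrder L] [LinearOrder ι]

def lexSlice (S : Set (Lex (ι → L))) (i : ι) (p : ∀ j, j < i → L) : Set L :=
  {l | ∃ z ∈ S, (∀ j (hj : j < i), ofLex z j = p j hj) ∧ ofLex z i = l}

variable [WellFoundedLT ι]

noncomputable def lexSup (hL : ∀ T : Set L, ∃ a, IsLUB T a) (S : Set (Lex (ι → L))) : ι → L :=
  WellFoundedLT.fix fun i p => (hL (lexSlice S i p)).choose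

lemma isLUB_lexSup_apply (hL : ∀ T : Set L, ∃ a, IsLUB T a) (S : Set (Lex (ι → L))) (i : ι) :
    IsLUB (lexSlice S i fun j _ => lexSup hL S j) (lexSup hL S i) := by
  rw [lexSup, WellFoundedLT.fix_eq]
  exact (hL _).choose_spec

theorem isLUB_lexSup (hL : ∀ T : Set L, ∃ a, IsLUB T a) (S : Set (Lex (ι → L))) :
    IsLUB S (toLex (lexSup hL S)) := by
  refine ⟨fun z hz => not_lt.mp ?_, fun b hb => not_lt.mp ?_⟩
  · rintro ⟨i, hagree, hlt⟩
    exact (isLUB_lexSup_apply hL S i).1 ⟨z, hz, fun j hj => (hagree j hj).symm, rfl⟩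
      |>.not_gt hlt
  · rintro ⟨i, hagree, hlt⟩
    obtain ⟨l, ⟨w, hwS, hwagree, rfl⟩, hbl, -⟩ := (isLUB_lexSup_apply hL S i).exists_between hlt
    exact (hb hwS).not_gt ⟨i, fun j hj => (hagree j hj).trans (hwagree j hj).symm, hbl⟩

end LexSup

theorem isEmpty_lex_prod_orderEmbedding {X Y : Type*} [LinearOrder X] [LinearOrder Y]
    [DenselyOrdered X] [Nontrivial Y]
    (hX : ∀ S : Set X, ∃ c, IsLUB S c) : IsEmpty (X ×ₗ Y ↪o X) := by
  refine ⟨fun e => ?_⟩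
  obtain ⟨a, b, hab⟩ := exists_pair_lt Y
  set u : X → X := fun x => e (toLex (x, a))
  set v : X → X := fun x => e (toLex (x, b))
  have hu_lt_v (x : X) : u x < v x :=
    e.lt_iff_lt.mpr (Prod.Lex.toLex_lt_toLex.mpr (Or.inr ⟨rfl, hab⟩))
  have hv_lt_u {x y : X} (hxy : x < y) : v x < u y :=
    e.lt_iff_lt.mpr (Prod.Lex.toLex_lt_toLex.mpr (Or.inl hxy))
  have hu_mono : Monotone u := fun x y hxy =>
    hxy.eq_or_lt.elim (fun h => h ▸ le_rfl) fun h => ((hu_lt_v x).trans (hv_lt_u h)).le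
  obtain ⟨c, hc⟩ := hX {x | x ≤ u x}
  have hc_le : c ≤ u c := hc.2 fun z hz => hz.trans (hu_mono (hc.1 hz))
  obtain ⟨d, hcd, hdv⟩ := exists_between (hc_le.trans_lt (hu_lt_v c))
  have hud : u d < d := not_le.mp fun hd => (hc.1 hd).not_gt hcd
  exact ((hv_lt_u hcd).trans (hud.trans hdv)).false

namespace PrincipalSeg

variable {L ι κ : Type*} [LinearOrder L] [LinearOrder ι] [WellFoundedLT ι] [LinearOrder κ]

noncomputable def lexPiProdEmbedding (f : ι <i κ) (l₀ : L) :
    Lex (ι → L) ×ₗ L ↪o Lex (κ → L) :=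
  OrderEmbedding.ofStrictMono
    (fun p => toLex (update (extend f (ofLex (ofLex p).1) fun _ => l₀) f.top (ofLex p).2)) <| by
    have hne (i : ι) : f i ≠ f.top := (f.lt_top i).ne
    have hextend (x : ι → L) (i : ι) : extend f x (fun _ => l₀) (f i) = x i :=
      f.injective.extend_apply _ _ _
    intro p q hlt
    rcases Prod.Lex.lt_iff.mp hlt with ⟨i, hagree, hi⟩ | ⟨heq, hlt₂⟩
    · refine ⟨f i, fun j hj => ?_, ?_⟩
      · obtain ⟨i', rfl, hi'⟩ := f.exists_eq_iff_rel.mp hj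
        simpa [update_of_ne (hne i'), hextend] using hagree i' hi'
      · simpa [update_of_ne (hne i), hextend] using hi
    · refine ⟨f.top, fun j hj => ?_, by simpa using hlt₂⟩
      obtain ⟨i', rfl⟩ := f.mem_range_of_rel_top hj
      simp [update_of_ne (hne i'), hextend, heq]

end PrincipalSeg

theorem Ordinal.le_of_lexPi_orderEmbedding {L : Type} [LinearOrder L] [Nontrivial L]
    (hc : CompactLine L) (hd : DenselyOrdered L) {α β : Ordinal}
    (e : Lex (α.ToType → L) ↪o Lex (β.ToType → L)) : α ≤ β := by
  by_contra! hβα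
  obtain ⟨f⟩ : Nonempty (β.ToType <i α.ToType) :=
    type_lt_iff.mp (by rwa [type_toType, type_toType])
  -- Mathlib's instance is stated for the `<` of `Pi.Lex`, which instance search does not
  -- identify with the one coming from `Lex (β.ToType → L)` being a linear order.
  have hdense : DenselyOrdered (Lex (β.ToType → L)) :=
    @Pi.instDenselyOrderedLexForall _ _ _ _ fun _ => hd
  have hLUB (S : Set (Lex (β.ToType → L))) : ∃ c, IsLUB S c :=
    ⟨_, isLUB_lexSup (fun T => (hc T).1) S⟩
  exact (@isEmpty_lex_prod_orderEmbedding _ _ _ _ hdense _ hLUB).false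
    ((f.lexPiProdEmbedding (Classical.arbitrary L)).trans e)

theorem stmt13 (L : Type) [LinearOrder L] [Nontrivial L]
    (hc : CompactLine L) (hd : DenselyOrdered L) (α : Ordinal) :
    sInf {β : Ordinal |
      Nonempty (Lex (α.ToType → L) ↪o Lex (β.ToType → L))} = α :=
  IsLeast.csInf_eq ⟨⟨(OrderIso.refl _).toOrderEmbedding⟩,
    fun _ ⟨e⟩ => Ordinal.le_of_lexPi_orderEmbedding hc hd e⟩
end

section
/- If α is an ordinal satisfying ω · α = α, then the least ordinal β such that the lexicographic power 2^α embeds into I^β (I = [0,1]) equals α, i.e., I-dim(2^α) = α. -/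
/-!
A lexicographic order embedding `e : 2^A ↪ 2^B` of well-ordered powers yields a strictly monotone
map `A → B`. For a cylinder (the functions with a prescribed restriction to `Iio a`) consider the
first coordinate of `B` at which `e` separates two of its points. Of the two halves obtained by also
fixing the bit at `a`, one has a strictly larger split level, and following such halves along a
branch `x : A → Bool` makes `a ↦ splitLevel (cylinder a x)` strictly monotone. Hence `2^α ↪ 2^β`
forces `α ≤ β`.

Cuts at the rationals embed `[0,1]` into `2^ω`, so `I^β` embeds into `(2^ω)^β ≅ 2^(ω·β)`, and
`2^α ↪ I^β` forces `α ≤ ω·β`. When `ω·α = α` this excludes `β < α`, while `2^α ↪ I^α` is clear.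
-/

open Ordinal Function

section SplitLevel

variable {A B : Type*} [LinearOrder A] [LinearOrder B]
  (e : Lex (A → Bool) ↪o Lex (B → Bool))

def cylinder (a : A) (p : A → Bool) : Set (A → Bool) := {y | ∀ a' < a, y a' = p a'}

lemma cylinder_congr {a : A} {p q : A → Bool} (h : ∀ a' < a, p a' = q a') :
    cylinder a p = cylinder a q := by
  ext y
  exact forall₂_congr fun a' ha' => by rw [h a' ha']

lemma update_mem_cylinder_inter (a : A) (p : A → Bool) (t : Bool) :
    update p a t ∈ cylinder a p ∩ {y | y a = t} :=
  ⟨fun _ ha' => update_of_ne ha'.ne _ _, update_self _ _ _⟩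

lemma update_update_mem_cylinder_inter {a c : A} (hac : a < c) (p : A → Bool) (t s : Bool) :
    update (update p a t) c s ∈ cylinder a p ∩ {y | y a = t} := by
  obtain ⟨hbelow, hat⟩ := update_mem_cylinder_inter a p t
  exact ⟨fun a' ha' => (update_of_ne (ha'.trans hac).ne _ _).trans (hbelow a' ha'),
    (update_of_ne hac.ne _ _).trans hat⟩

def splitSet (S : Set (A → Bool)) : Set B :=
  {b | ∃ y ∈ S, ∃ z ∈ S, e (toLex y) b ≠ e (toLex z) b}

lemma splitSet_mono {S S' : Set (A → Bool)} (h : S' ⊆ S) : splitSet e S' ⊆ splitSet e S :=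
  fun _ ⟨y, hy, z, hz, hne⟩ => ⟨y, h hy, z, h hz, hne⟩

lemma splitSet_nonempty {S : Set (A → Bool)} {y z : A → Bool} (hy : y ∈ S) (hz : z ∈ S)
    {a : A} (hyz : y a ≠ z a) : (splitSet e S).Nonempty := by
  have : e (toLex y) ≠ e (toLex z) := fun h => hyz (congrFun (e.injective h) a)
  obtain ⟨b, hb⟩ := Function.ne_iff.mp this
  exact ⟨b, y, hy, z, hz, hb⟩

lemma splitSet_cylinder_nonempty (a : A) (p : A → Bool) :
    (splitSet e (cylinder a p)).Nonempty :=
  splitSet_nonempty e (update_mem_cylinder_inter a p false).1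
    (update_mem_cylinder_inter a p true).1 (a := a) (by simp)

lemma splitSet_cylinder_inter_nonempty {a c : A} (hac : a < c) (p : A → Bool) (t : Bool) :
    (splitSet e (cylinder a p ∩ {y | y a = t})).Nonempty :=
  splitSet_nonempty e (update_update_mem_cylinder_inter hac p t false)
    (update_update_mem_cylinder_inter hac p t true) (a := c) (by simp)

lemma exists_mem_apply_eq_of_mem_splitSet {S : Set (A → Bool)} {b : B}
    (hb : b ∈ splitSet e S) (c : Bool) : ∃ y ∈ S, e (toLex y) b = c := by
  obtain ⟨y, hy, z, hz, hne⟩ := hb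
  by_cases hyc : e (toLex y) b = c
  · exact ⟨y, hy, hyc⟩
  · exact ⟨z, hz, by cases c <;> simp_all⟩

variable [WellFoundedLT B] [Nonempty B]

open Classical in
-- Junk value when `e` is constant on `S`.
noncomputable def splitLevel (S : Set (A → Bool)) : B :=
  if h : (splitSet e S).Nonempty then wellFounded_lt.min _ h else Classical.arbitrary B

lemma splitLevel_mem {S : Set (A → Bool)} (h : (splitSet e S).Nonempty) :
    splitLevel e S ∈ splitSet e S := by
  rw [splitLevel, dif_pos h]
  exact wellFounded_lt.min_mem _ h

lemma apply_eq_of_lt_splitLevel {S : Set (A → Bool)} {b : B} (hb : b < splitLevel e S)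
    {y z : A → Bool} (hy : y ∈ S) (hz : z ∈ S) : e (toLex y) b = e (toLex z) b := by
  by_contra hne
  have hmem : b ∈ splitSet e S := ⟨y, hy, z, hz, hne⟩
  rw [splitLevel, dif_pos ⟨b, hmem⟩] at hb
  exact (wellFounded_lt.min_le hmem).not_gt hb

lemma splitLevel_le_of_subset {S S' : Set (A → Bool)} (h : S' ⊆ S)
    (h' : (splitSet e S').Nonempty) : splitLevel e S ≤ splitLevel e S' := by
  rw [splitLevel, dif_pos (h'.mono (splitSet_mono e h))]
  exact wellFounded_lt.min_le (splitSet_mono e h (splitLevel_mem e h'))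

/-- If both halves still split at the level `g` of the cylinder, some `u` with `u a = false` has
image bit `1` at `g` and some `v` with `v a = true` has image bit `0` there, so `u < v` but
`e v < e u`. -/
lemma exists_splitLevel_lt_splitLevel_inter {a c : A} (hac : a < c) (p : A → Bool) :
    ∃ t : Bool, splitLevel e (cylinder a p) < splitLevel e (cylinder a p ∩ {y | y a = t}) := by
  set g := splitLevel e (cylinder a p)
  by_contra! hle
  have hg : ∀ t, g ∈ splitSet e (cylinder a p ∩ {y | y a = t}) := fun t => by
    have hne := splitSet_cylinder_inter_nonempty e hac p t
    rw [← (hle t).antisymm (splitLevel_le_of_subset e Set.inter_subset_left hne)]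
    exact splitLevel_mem e hne
  obtain ⟨u, ⟨hu, hua⟩, hug⟩ := exists_mem_apply_eq_of_mem_splitSet e (hg false) true
  obtain ⟨v, ⟨hv, hva⟩, hvg⟩ := exists_mem_apply_eq_of_mem_splitSet e (hg true) false
  have huv : toLex u < toLex v :=
    ⟨a, fun a' ha' => (hu a' ha').trans (hv a' ha').symm, by simp_all⟩
  have hvu : e (toLex v) < e (toLex u) :=
    ⟨g, fun b hb => apply_eq_of_lt_splitLevel e hb hv hu, by simp_all⟩
  exact (e.strictMono huv).not_gt hvu

open Classical in
noncomputable def branchBit (a : A) (C : Set (A → Bool)) : Bool :=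
  if h : ∃ t : Bool, splitLevel e C < splitLevel e (C ∩ {y | y a = t}) then h.choose else false

lemma splitLevel_lt_splitLevel_branchBit {a c : A} (hac : a < c) (p : A → Bool) :
    splitLevel e (cylinder a p) <
      splitLevel e (cylinder a p ∩ {y | y a = branchBit e a (cylinder a p)}) := by
  have h := exists_splitLevel_lt_splitLevel_inter e hac p
  rw [branchBit, dif_pos h]
  exact h.choose_spec

variable [WellFoundedLT A]

noncomputable def branch : A → Bool :=
  wellFounded_lt.fix fun a x =>
    branchBit e a (cylinder a fun a' => if h : a' < a then x a' h else false)

lemma branch_apply (a : A) : branch e a = branchBit e a (cylinder a (branch e)) := by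
  rw [branch, WellFounded.fix_eq]
  exact congrArg (branchBit e a) (cylinder_congr fun a' ha' => dif_pos ha')

lemma strictMono_splitLevel_cylinder_branch :
    StrictMono fun a => splitLevel e (cylinder a (branch e)) := by
  intro a a' haa'
  refine (splitLevel_lt_splitLevel_branchBit e haa' (branch e)).trans_le
    (splitLevel_le_of_subset e (fun y hy => ⟨fun a'' ha'' => hy a'' (ha''.trans haa'), ?_⟩)
      (splitSet_cylinder_nonempty e a' (branch e)))
  exact (hy a haa').trans (branch_apply e a)

end SplitLevel

theorem exists_strictMono_of_lex_bool_orderEmbedding {A B : Type*} [LinearOrder A]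
    [WellFoundedLT A] [LinearOrder B] [WellFoundedLT B]
    (e : Lex (A → Bool) ↪o Lex (B → Bool)) : ∃ f : A → B, StrictMono f := by
  rcases isEmpty_or_nonempty A with _ | ⟨⟨a⟩⟩
  · exact ⟨isEmptyElim, fun a => isEmptyElim a⟩
  · have : Nonempty B := ⟨(splitSet_cylinder_nonempty e a fun _ => false).some⟩
    exact ⟨_, strictMono_splitLevel_cylinder_branch e⟩

theorem Ordinal.le_of_lex_bool_orderEmbedding {α β : Ordinal}
    (e : Lex (α.ToType → Bool) ↪o Lex (β.ToType → Bool)) : α ≤ β := by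
  obtain ⟨f, hf⟩ := exists_strictMono_of_lex_bool_orderEmbedding e
  rw [← type_toType α, ← type_toType β]
  exact type_le_iff'.mpr ⟨(OrderEmbedding.ofStrictMono f hf).ltEmbedding⟩

noncomputable def OrderEmbedding.lexPiCongrRight {ι X Y : Type*} [LinearOrder ι]
    [WellFoundedLT ι] [LinearOrder X] [LinearOrder Y] (f : X ↪o Y) : Lex (ι → X) ↪o Lex (ι → Y) :=
  .ofStrictMono (fun x => toLex (f ∘ ofLex x)) fun _ _ ⟨i, hbelow, hi⟩ =>
    ⟨i, fun j hj => congrArg f (hbelow j hj), f.strictMono hi⟩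

noncomputable def OrderEmbedding.lexPiCurry {B N C X : Type*} [LinearOrder B] [WellFoundedLT B]
    [LinearOrder N] [WellFoundedLT N] [LinearOrder C] [WellFoundedLT C] [LinearOrder X]
    (ψ : C ≃o B ×ₗ N) : Lex (B → Lex (N → X)) ↪o Lex (C → X) :=
  .ofStrictMono (fun F => toLex fun c => ofLex (ofLex F (ofLex (ψ c)).1) (ofLex (ψ c)).2)
    fun F F' ⟨b, hbelow, n, hnbelow, hn⟩ => by
      refine ⟨ψ.symm (toLex (b, n)), fun c hc => ?_, by simpa using hn⟩
      rcases Prod.Lex.lt_iff.mp (ψ.lt_symm_apply.mp hc) with h | ⟨h, h'⟩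
      · exact congrFun (congrArg ofLex (hbelow _ h)) _
      · change ofLex (ofLex F _) _ = ofLex (ofLex F' _) _
        rw [h]
        exact hnbelow _ h'

theorem strictMono_toLex_decide_le {N : Type*} [LinearOrder N] [WellFoundedLT N] {q : N → ℚ}
    (hq : Surjective q) : StrictMono fun x : ℝ => toLex fun n => decide ((q n : ℝ) ≤ x) := by
  refine Pi.toLex_strictMono.comp fun x y hxy => lt_of_le_of_ne (fun n => ?_) fun h => ?_
  · simpa [Bool.le_iff_imp] using fun h => h.trans hxy.le
  · obtain ⟨r, hxr, hry⟩ := exists_rat_btwn hxy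
    obtain ⟨n, rfl⟩ := hq r
    exact (not_le.mpr hxr) (by simpa [hry.le] using congrFun h n)

theorem Ordinal.nonempty_orderIso_toType_omega0_mul (β : Ordinal.{u}) :
    Nonempty ((ω * β).ToType ≃o β.ToType ×ₗ ULift.{u} ℕ) := by
  have h : typeLT (ω * β).ToType =
      type (Prod.Lex (α := β.ToType) (β := ULift.{u} ℕ) (· < ·) (· < ·)) := by
    rw [type_prod_lex, type_toType, type_toType, type_lt_ulift, type_nat_lt, lift_omega0]
  exact (type_eq.mp h).map OrderIso.ofRelIsoLT

theorem Ordinal.le_omega0_mul_of_lex_orderEmbedding {α β : Ordinal.{u}}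
    (e : Lex (α.ToType → Bool) ↪o Lex (β.ToType → Set.Icc (0 : ℝ) 1)) : α ≤ ω * β := by
  obtain ⟨ψ⟩ := nonempty_orderIso_toType_omega0_mul β
  have hq : Surjective ((Denumerable.eqv ℚ).symm ∘ ULift.down.{u}) :=
    (Denumerable.eqv ℚ).symm.surjective.comp ULift.down_surjective
  let ι : Set.Icc (0 : ℝ) 1 ↪o Lex (ULift.{u} ℕ → Bool) :=
    .ofStrictMono _ ((strictMono_toLex_decide_le hq).comp (Subtype.strictMono_coe _))
  exact le_of_lex_bool_orderEmbedding
    (e.trans (ι.lexPiCongrRight.trans (OrderEmbedding.lexPiCurry ψ)))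

theorem stmt14 (α : Ordinal) (h : Ordinal.omega0 * α = α) :
    sInf {β : Ordinal |
      Nonempty (Lex (α.ToType → Bool) ↪o Lex (β.ToType → Set.Icc (0 : ℝ) 1))} = α := by
  let ι : Bool ↪o Set.Icc (0 : ℝ) 1 := .ofStrictMono (fun b => if b then 1 else 0) fun a b hab => by
    obtain ⟨rfl, rfl⟩ := Bool.lt_iff.mp hab
    exact zero_lt_one
  have hα : Nonempty (Lex (α.ToType → Bool) ↪o Lex (α.ToType → Set.Icc (0 : ℝ) 1)) :=
    ⟨ι.lexPiCongrRight⟩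
  refine le_antisymm (csInf_le' hα) (le_csInf ⟨α, hα⟩ fun β ⟨e⟩ => ?_)
  by_contra! hβ
  refine lt_irrefl α ?_
  calc α ≤ ω * β := le_omega0_mul_of_lex_orderEmbedding e
    _ < ω * α := mul_lt_mul_of_pos_left hβ omega0_pos
    _ = α := h
end

section
/- Any two directed graphs of cardinality continuum which are strictly saturated and contain no infinite directed path are isomorphic. -/
/-- A directed graph (given by its arrow relation) is strictly saturated if every
out-neighborhood is countable, and every countable vertex set is the out-neighborhood
of as many vertices as there are vertices in the graph. -/
def StrictlySat {V : Type*} (G : V → V → Prop) : Prop :=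
  (∀ v : V, {w | G v w}.Countable) ∧
  ∀ A : Set V, A.Countable →
    Cardinal.mk {g : V | {w | G g w} = A} = Cardinal.mk V

/-- No infinite directed path. -/
def NoInfPath {V : Type*} (G : V → V → Prop) : Prop :=
  ¬ ∃ f : ℕ → V, ∀ n, G (f n) (f (n + 1))

/-!
Reversing the arrows turns "no infinite path" into well-foundedness, so a map `f : V → W` can be
defined by recursion: `f v` is the image of `v` under a fixed bijection between the fibres
`N_G⁻¹(A)` and `N_H⁻¹(f[A])` for `A = N_G(v)`; by saturation all these fibres have size continuum.
Then `N_H(f v) = f[N_G(v)]`, so `f` preserves arrows. It is injective by induction along `G`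
(equal values force equal images of the neighbourhoods, hence by induction equal neighbourhoods,
hence a common fibre), and surjective by induction along `H` (once `N_H(w)` lies in the range
of `f`, the vertex `w` lies in the fibre over `f[f⁻¹(N_H(w))]`, which `f` covers).
-/

open Cardinal Set Function

universe u

variable {V W : Type u}

def outNbhd (G : V → V → Prop) (v : V) : Set V := {w | G v w}

theorem NoInfPath.wellFounded_flip {G : V → V → Prop} (h : NoInfPath G) :
    WellFounded (flip G) :=
  wellFounded_iff_isEmpty_descending_chain.2 ⟨fun ⟨f, hf⟩ => h ⟨f, hf⟩⟩

theorem WellFounded.exists_eq_apply_image_outNbhd {G : V → V → Prop} (hG : WellFounded (flip G))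
    (Φ : V → Set W → W) : ∃ f : V → W, ∀ v, f v = Φ v (f '' outNbhd G v) :=
  ⟨hG.fix fun v g => Φ v (range fun b : outNbhd G v => g b b.2),
    fun v => by rw [hG.fix_eq, image_eq_range]⟩

theorem exists_bijOn_of_mk_eq {α β : Type u} [Nonempty β] {s : Set α} {t : Set β}
    (h : #s = #t) : ∃ f : α → β, BijOn f s t := by
  classical
  obtain ⟨e⟩ := Cardinal.eq.1 h
  set f : α → β := fun x => if hx : x ∈ s then e ⟨x, hx⟩ else Classical.arbitrary β
  have hfe : ∀ x (hx : x ∈ s), f x = e ⟨x, hx⟩ := fun x hx => dif_pos hx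
  refine ⟨f, fun x hx => hfe x hx ▸ (e ⟨x, hx⟩).2, fun x hx y hy hxy => ?_, fun y hy => ?_⟩
  · rw [hfe x hx, hfe y hy] at hxy
    exact congrArg Subtype.val (e.injective (Subtype.ext hxy))
  · exact ⟨_, (e.symm ⟨y, hy⟩).2, by rw [hfe _ (e.symm _).2, Subtype.coe_eta, e.apply_symm_apply]⟩

section FiberBijective

variable {G : V → V → Prop} {H : W → W → Prop} {f : V → W}

def FiberBijective (G : V → V → Prop) (H : W → W → Prop) (f : V → W) : Prop :=
  ∀ A : Set V, A.Countable → BijOn f (outNbhd G ⁻¹' {A}) (outNbhd H ⁻¹' {f '' A})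

theorem exists_fiberBijective [Nonempty W] (hG : WellFounded (flip G))
    (hfib : ∀ (A : Set V) (B : Set W), A.Countable → B.Countable →
      #(outNbhd G ⁻¹' {A}) = #(outNbhd H ⁻¹' {B})) :
    ∃ f, FiberBijective G H f := by
  have hψ : ∀ A B, ∃ ψ : V → W, A.Countable → B.Countable →
      BijOn ψ (outNbhd G ⁻¹' {A}) (outNbhd H ⁻¹' {B}) := by
    intro A B
    by_cases h : A.Countable ∧ B.Countable
    · exact (exists_bijOn_of_mk_eq (hfib A B h.1 h.2)).imp fun ψ hψ _ _ => hψ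
    · exact ⟨fun _ => Classical.arbitrary W, fun hA hB => (h ⟨hA, hB⟩).elim⟩
  choose ψ hψ using hψ
  obtain ⟨f, hf⟩ := hG.exists_eq_apply_image_outNbhd fun v B => ψ (outNbhd G v) B v
  refine ⟨f, fun A hA => (hψ A _ hA (hA.image f)).congr fun v hv => ?_⟩
  rw [hf v, show outNbhd G v = A from hv]

namespace FiberBijective

variable (hf : FiberBijective G H f) (hGcnt : ∀ v, (outNbhd G v).Countable)
include hf hGcnt

theorem outNbhd_apply (v : V) : outNbhd H (f v) = f '' outNbhd G v :=
  (hf _ (hGcnt v)).mapsTo (show v ∈ outNbhd G ⁻¹' {outNbhd G v} from rfl)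

theorem injective (hG : WellFounded (flip G)) : Injective f := by
  intro a
  induction a using hG.induction with
  | _ a IH =>
  intro a' heq
  have himage : f '' outNbhd G a = f '' outNbhd G a' := by
    rw [← hf.outNbhd_apply hGcnt, ← hf.outNbhd_apply hGcnt, heq]
  have hnbhd : outNbhd G a = outNbhd G a' := by
    ext b
    constructor
    · intro hb
      obtain ⟨b', hb', hfb⟩ := himage ▸ mem_image_of_mem f hb
      exact IH b hb hfb.symm ▸ hb'
    · intro hb
      obtain ⟨c, hc, hfc⟩ := himage.symm ▸ mem_image_of_mem f hb
      exact IH c hc hfc ▸ hc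
  exact (hf _ (hGcnt a)).injOn rfl hnbhd.symm heq

theorem rel_iff (hinj : Injective f) (a b : V) : H (f a) (f b) ↔ G a b := by
  change f b ∈ outNbhd H (f a) ↔ b ∈ outNbhd G a
  rw [hf.outNbhd_apply hGcnt, hinj.mem_set_image]

end FiberBijective

theorem FiberBijective.surjective (hf : FiberBijective G H f) (hH : WellFounded (flip H))
    (hHcnt : ∀ w, (outNbhd H w).Countable) (hinj : Injective f) : Surjective f := by
  intro w
  induction w using hH.induction with
  | _ w IH =>
  have himage : f '' (f ⁻¹' outNbhd H w) = outNbhd H w :=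
    image_preimage_eq_of_subset fun w' hw' => IH w' hw'
  obtain ⟨v, -, hv⟩ := (hf _ ((hHcnt w).preimage hinj)).surjOn
    (show w ∈ outNbhd H ⁻¹' {f '' (f ⁻¹' outNbhd H w)} from himage.symm)
  exact ⟨v, hv⟩

end FiberBijective

theorem nonempty_relIso_of_mk_fiber_eq {G : V → V → Prop} {H : W → W → Prop} [Nonempty W]
    (hG : WellFounded (flip G)) (hH : WellFounded (flip H))
    (hGcnt : ∀ v, (outNbhd G v).Countable) (hHcnt : ∀ w, (outNbhd H w).Countable)
    (hfib : ∀ (A : Set V) (B : Set W), A.Countable → B.Countable →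
      #(outNbhd G ⁻¹' {A}) = #(outNbhd H ⁻¹' {B})) :
    Nonempty (G ≃r H) := by
  obtain ⟨f, hf⟩ := exists_fiberBijective hG hfib
  have hinj := hf.injective hGcnt hG
  exact ⟨⟨Equiv.ofBijective f ⟨hinj, hf.surjective hH hHcnt hinj⟩, hf.rel_iff hGcnt hinj _ _⟩⟩

theorem stmt15 (V W : Type) (G : V → V → Prop) (H : W → W → Prop)
    (hVc : Cardinal.mk V = Cardinal.continuum)
    (hWc : Cardinal.mk W = Cardinal.continuum)
    (hG : StrictlySat G) (hH : StrictlySat H)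
    (hGp : NoInfPath G) (hHp : NoInfPath H) :
    ∃ e : V ≃ W, ∀ a b : V, G a b ↔ H (e a) (e b) := by
  have : Nonempty W := mk_ne_zero_iff.1 (hWc ▸ continuum_ne_zero)
  obtain ⟨e⟩ := nonempty_relIso_of_mk_fiber_eq hGp.wellFounded_flip hHp.wellFounded_flip hG.1 hH.1
    fun A B hA hB => (hG.2 A hA).trans <| hVc.trans <| hWc.symm.trans (hH.2 B hB).symm
  exact ⟨e.toEquiv, fun a b => e.map_rel_iff.symm⟩
end

section
/- The undirected graph on the set H(ω₁) of hereditarily countable sets, with an edge between x and y iff x ∈ y or y ∈ x, is (ω₁, 𝔠)-saturated: for all disjoint vertex sets A, B with |A| ≤ ω and |B| < 𝔠, there is a vertex v ∉ A ∪ B adjacent to every element of A and to no element of B. Consequently |H(ω₁)| = 𝔠. -/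
/-- A ZFC set is hereditarily countable. -/
def HC (x : ZFSet) : Prop :=
  ZFSet.Hereditarily (fun y => y.toSet.Countable) x

/-- The graph on `H(ω₁)`: an edge between `x` and `y` iff `x ∈ y` or `y ∈ x`. -/
def HGraph : SimpleGraph {x : ZFSet // HC x} :=
  SimpleGraph.fromRel (fun x y => x.1 ∈ y.1)

/-!
Saturation: put `S = A ∪ B` and take `v = A ∪ {c}` with `c ∉ S ∪ ⋃S ∪ ⋃⋃S`. Then `v` is adjacent
to every `a ∈ A` (as `a ∈ v`), and to no `b ∈ B` (as `b ≠ c`, while `v ∈ b` would put `c` in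
`⋃⋃S`). Since all elements of `S` are countable and `|S| < 𝔠`, the forbidden set has fewer than
`𝔠` elements, so such a `c` exists among the `𝔠` hereditarily countable subsets of `V_ω`.

Cardinality: `V_(ω+1) ⊆ H(ω₁)` gives `𝔠 ≤ |H(ω₁)|`. Conversely, every hereditarily countable set
has rank `< ω₁`, and a set of rank `≤ β` is a countable subset of the sets of rank `< β`; by
induction on `β < ω₁` there are at most `𝔠 ^ ℵ₀ = 𝔠` such sets at each level, hence at most
`ℵ₁ · 𝔠 = 𝔠` in total.
-/

universe u

open Cardinal
open scoped Ordinal ZFSet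

namespace Cardinal

theorem mk_biUnion_lt_of_countable {ι α : Type u} {s : Set ι} {t : ι → Set α} {c : Cardinal}
    (hc : ℵ₀ < c) (hs : #s < c) (ht : ∀ i ∈ s, (t i).Countable) : #(⋃ i ∈ s, t i) < c := by
  refine (mk_biUnion_le t s).trans_lt (mul_lt_of_lt hc.le hs ?_)
  exact (ciSup_le' fun i : s => le_aleph0_iff_set_countable.2 (ht i.1 i.2)).trans_lt hc

theorem mk_setOf_countable_le_continuum {α : Type*} (h : #α ≤ 𝔠) :
    #{s : Set α // s.Countable} ≤ 𝔠 := by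
  simp_rw [← le_aleph0_iff_set_countable]
  calc #{s : Set α // #s ≤ ℵ₀} ≤ max #α ℵ₀ ^ ℵ₀ := mk_bounded_set_le α ℵ₀
    _ ≤ 𝔠 ^ ℵ₀ := power_le_power_right (max_le h aleph0_le_continuum)
    _ = 𝔠 := continuum_power_aleph0

theorem mk_countable_subsets_le_continuum {α : Type u} {S : Set α} (h : #S ≤ 𝔠) :
    #{s : Set α // s ⊆ S ∧ s.Countable} ≤ 𝔠 := by
  refine (mk_le_of_surjective (f := fun t : {t : Set S // t.Countable} =>
    (⟨(↑) '' t.1, Subtype.coe_image_subset S t.1, t.2.image _⟩ :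
      {s : Set α // s ⊆ S ∧ s.Countable})) ?_).trans (mk_setOf_countable_le_continuum h)
  rintro ⟨s, hsS, hs⟩
  refine ⟨⟨(↑) ⁻¹' s, hs.preimage Subtype.val_injective⟩, Subtype.ext ?_⟩
  simpa [Subtype.image_preimage_coe] using hsS

end Cardinal

namespace ZFSet

theorem exists_coe_eq_of_countable {s : Set ZFSet.{u}} (hs : s.Countable) :
    ∃ x : ZFSet.{u}, (x : Set ZFSet) = s :=
  have := hs.to_subtype
  ⟨coeEquiv.symm ⟨s, Countable.toSmall s⟩, by
    rw [← coeEquiv_apply_coe, Equiv.apply_symm_apply]⟩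

theorem mk_vonNeumann (o : Ordinal.{u}) : #(V_ o) = lift.{u + 1} (preBeth o) := by
  rw [cardinalMk_coe_sort, card_vonNeumann]

theorem mk_vonNeumann_omega0_add_one : #(V_ (ω + 1) : ZFSet.{u}) = 𝔠 := by
  rw [mk_vonNeumann, preBeth_add_one, preBeth_omega, two_power_aleph0, lift_continuum]

theorem exists_mem_vonNeumann_omega0_add_one_notMem {X : Set ZFSet.{u}} (hX : #X < 𝔠) :
    ∃ c ∈ V_ (ω + 1), c ∉ X := by
  by_contra! h
  exact (mk_vonNeumann_omega0_add_one.symm.trans_le (mk_le_mk_of_subset h)).not_gt hX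

def sUnionSet (S : Set ZFSet.{u}) : Set ZFSet.{u} :=
  ⋃ x ∈ S, (x : Set ZFSet)

theorem mem_sUnionSet {S : Set ZFSet.{u}} {y : ZFSet.{u}} :
    y ∈ sUnionSet S ↔ ∃ x ∈ S, y ∈ x :=
  Set.mem_iUnion₂.trans (by simp)

theorem separates_of_coe_eq_insert {A B : Set ZFSet.{u}} {c v : ZFSet.{u}} (hAB : Disjoint A B)
    (hv : (v : Set ZFSet) = insert c A)
    (hc : c ∉ (A ∪ B) ∪ sUnionSet (A ∪ B) ∪ sUnionSet (sUnionSet (A ∪ B))) :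
    v ∉ A ∪ B ∧ (∀ a ∈ A, v ≠ a ∧ a ∈ v) ∧ ∀ b ∈ B, v ∉ b ∧ b ∉ v := by
  have hv : ∀ y, y ∈ v ↔ y = c ∨ y ∈ A := fun y => by rw [← SetLike.mem_coe, hv]; rfl
  have hcv : c ∈ v := (hv c).2 (Or.inl rfl)
  have hvS : v ∉ A ∪ B := fun h => hc (Or.inl (Or.inr (mem_sUnionSet.2 ⟨v, h, hcv⟩)))
  refine ⟨hvS, fun a ha => ⟨fun h => hvS (h ▸ Or.inl ha), (hv a).2 (Or.inr ha)⟩,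
    fun b hb => ⟨fun h => ?_, fun h => ?_⟩⟩
  · exact hc (Or.inr (mem_sUnionSet.2 ⟨v, mem_sUnionSet.2 ⟨b, Or.inr hb, h⟩, hcv⟩))
  · rcases (hv b).1 h with rfl | hbA
    · exact hc (Or.inl (Or.inl (Or.inr hb)))
    · exact Set.disjoint_left.1 hAB hbA hb

end ZFSet

theorem hc_iff {x : ZFSet} : HC x ↔ (x : Set ZFSet).Countable ∧ ∀ y ∈ x, HC y :=
  ZFSet.hereditarily_iff

theorem HC.countable {x : ZFSet} (h : HC x) : (x : Set ZFSet).Countable :=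
  ZFSet.Hereditarily.self h

theorem HC.mem {x y : ZFSet} (h : HC x) (hy : y ∈ x) : HC y :=
  ZFSet.Hereditarily.mem h hy

theorem hc_of_subset_of_isTransitive {T x : ZFSet} (hT : T.IsTransitive)
    (hTc : (T : Set ZFSet).Countable) (h : x ⊆ T) : HC x := by
  induction x using ZFSet.inductionOn with
  | _ x ih =>
    exact hc_iff.2 ⟨hTc.mono (ZFSet.coe_subset_coe.2 h),
      fun y hy => ih y hy (hT.subset_of_mem (h hy))⟩

theorem hc_of_mem_vonNeumann_omega0_add_one {x : ZFSet.{u}} (h : x ∈ V_ (ω + 1)) : HC x := by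
  rw [ZFSet.vonNeumann_add_one, ZFSet.mem_powerset] at h
  refine hc_of_subset_of_isTransitive (ZFSet.isTransitive_vonNeumann ω) ?_ h
  rw [← le_aleph0_iff_set_countable]
  exact (ZFSet.mk_vonNeumann ω).trans_le (by simp [preBeth_omega])

theorem hc_of_mem_sUnionSet {S : Set ZFSet.{u}} {y : ZFSet.{u}} (h : ∀ x ∈ S, HC x)
    (hy : y ∈ ZFSet.sUnionSet S) : HC y :=
  let ⟨x, hx, hyx⟩ := ZFSet.mem_sUnionSet.1 hy
  (h x hx).mem hyx

theorem mk_sUnionSet_lt_continuum {S : Set ZFSet.{u}} (hS : #S < 𝔠) (h : ∀ x ∈ S, HC x) :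
    #(ZFSet.sUnionSet S) < 𝔠 :=
  mk_biUnion_lt_of_countable aleph0_lt_continuum hS fun x hx => (h x hx).countable

theorem HC.rank_lt_omega_one {x : ZFSet.{u}} (h : HC x) : x.rank < ω₁ := by
  induction x using ZFSet.inductionOn with
  | _ x ih =>
    have hx : lift.{u, u + 1} #x < (Ordinal.lift.{u + 1, u} ω₁).cof := by
      rw [← Ordinal.lift_cof, Cardinal.cof_omega_one, lift_aleph, Ordinal.lift_one]
      exact (lift_le_aleph0.2 (le_aleph0_iff_set_countable.2 h.countable)).trans_lt
        aleph0_lt_aleph_one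
    refine (ZFSet.rank_le_iff.2 fun y hy => ?_).trans_lt
      (Ordinal.lift_iSup_add_one_lt_of_lt_cof hx fun y : x => ih y y.2 (h.mem y.2))
    exact Ordinal.lt_iSup_add_one (fun y : x => y.1.rank) ⟨y, hy⟩

theorem hGraph_adj_iff {x y : {x : ZFSet.{u} // HC x}} :
    HGraph.Adj x y ↔ x.1 ≠ y.1 ∧ (x.1 ∈ y.1 ∨ y.1 ∈ x.1) := by
  simp [HGraph, Subtype.ext_iff]

theorem hGraph_saturated (A B : Set {x : ZFSet.{u} // HC x}) (hA : A.Countable)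
    (hB : #B < 𝔠) (hAB : Disjoint A B) :
    ∃ v, v ∉ A ∪ B ∧ (∀ a ∈ A, HGraph.Adj v a) ∧ ∀ b ∈ B, ¬HGraph.Adj v b := by
  set S := Subtype.val '' A ∪ Subtype.val '' B
  have hS : ∀ x ∈ S, HC x := by rintro _ (⟨x, -, rfl⟩ | ⟨x, -, rfl⟩) <;> exact x.2
  have hSc : #S < 𝔠 := by
    refine (mk_union_le _ _).trans_lt
      (add_lt_of_lt aleph0_le_continuum ?_ (mk_image_le.trans_lt hB))
    exact (le_aleph0_iff_set_countable.2 (hA.image _)).trans_lt aleph0_lt_continuum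
  have hS1c := mk_sUnionSet_lt_continuum hSc hS
  have hS2c := mk_sUnionSet_lt_continuum hS1c fun y hy => hc_of_mem_sUnionSet hS hy
  obtain ⟨c, hcV, hc⟩ := ZFSet.exists_mem_vonNeumann_omega0_add_one_notMem
    (X := S ∪ ZFSet.sUnionSet S ∪ ZFSet.sUnionSet (ZFSet.sUnionSet S))
    ((mk_union_le _ _).trans_lt (add_lt_of_lt aleph0_le_continuum
      ((mk_union_le _ _).trans_lt (add_lt_of_lt aleph0_le_continuum hSc hS1c)) hS2c))
  obtain ⟨w, hw⟩ := ZFSet.exists_coe_eq_of_countable (hA.image Subtype.val)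
  have hv : ((insert c w : ZFSet) : Set ZFSet) = insert c (Subtype.val '' A) := by
    rw [ZFSet.coe_insert, hw]
  have hvHC : HC (insert c w) := by
    refine hc_iff.2 ⟨hv ▸ (hA.image _).insert c, fun y hy => ?_⟩
    rw [← SetLike.mem_coe, hv] at hy
    rcases hy with rfl | ⟨a, -, rfl⟩
    · exact hc_of_mem_vonNeumann_omega0_add_one hcV
    · exact a.2
  obtain ⟨hvAB, hvA, hvB⟩ := ZFSet.separates_of_coe_eq_insert (B := Subtype.val '' B)
    (Set.disjoint_image_iff Subtype.val_injective |>.2 hAB) hv hc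
  refine ⟨⟨insert c w, hvHC⟩, fun h => hvAB ?_, fun a ha => ?_, fun b hb => ?_⟩
  · exact h.imp (Set.mem_image_of_mem _) (Set.mem_image_of_mem _)
  · exact hGraph_adj_iff.2 ⟨(hvA a ⟨a, ha, rfl⟩).1, Or.inr (hvA _ ⟨a, ha, rfl⟩).2⟩
  · rw [hGraph_adj_iff]
    have := hvB b ⟨b, hb, rfl⟩
    tauto

theorem mk_setOf_hc_rank_le_le_continuum {β : Ordinal.{u}}
    (hβ : #{y : ZFSet.{u} | HC y ∧ y.rank < β} ≤ 𝔠) :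
    #{x : ZFSet.{u} | HC x ∧ x.rank ≤ β} ≤ 𝔠 := by
  refine (mk_le_of_injective (f := fun x : {x : ZFSet.{u} | HC x ∧ x.rank ≤ β} =>
    (⟨x.1, fun y hy => ⟨x.2.1.mem hy, (ZFSet.rank_lt_of_mem hy).trans_le x.2.2⟩,
      x.2.1.countable⟩ : {s : Set ZFSet // s ⊆ {y | HC y ∧ y.rank < β} ∧ s.Countable}))
    ?_).trans (mk_countable_subsets_le_continuum hβ)
  intro x x' h
  exact Subtype.ext (SetLike.coe_injective (congrArg Subtype.val h))

theorem mk_setOf_hc_rank_lt_le_continuum (o : Ordinal.{u}) (ho : o.card ≤ 𝔠) :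
    #{x : ZFSet.{u} | HC x ∧ x.rank < o} ≤ 𝔠 := by
  induction o using WellFoundedLT.induction with
  | _ o ih =>
  have hsub : {x : ZFSet.{u} | HC x ∧ x.rank < o} ⊆
      ⋃ β ∈ Set.Iio o, {x : ZFSet.{u} | HC x ∧ x.rank ≤ β} :=
    fun x hx => Set.mem_biUnion hx.2 ⟨hx.1, le_rfl⟩
  calc #{x : ZFSet.{u} | HC x ∧ x.rank < o}
      ≤ #(Set.Iio o) * ⨆ β : Set.Iio o, #{x : ZFSet.{u} | HC x ∧ x.rank ≤ β} :=
        (mk_le_mk_of_subset hsub).trans (mk_biUnion_le _ _)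
    _ ≤ 𝔠 * 𝔠 := by
        gcongr
        · rw [mk_Iio_ordinal, ← lift_continuum.{u + 1, u}, lift_le]
          exact ho
        · exact ciSup_le' fun β => mk_setOf_hc_rank_le_le_continuum
            (ih β β.2 ((Ordinal.card_le_card (le_of_lt β.2)).trans ho))
    _ = 𝔠 := mul_eq_self aleph0_le_continuum

theorem mk_hc : #{x : ZFSet.{u} // HC x} = 𝔠 := by
  apply le_antisymm
  · calc #{x : ZFSet.{u} // HC x} ≤ #{x : ZFSet.{u} | HC x ∧ x.rank < ω₁} :=
          mk_le_mk_of_subset fun x hx => ⟨hx, HC.rank_lt_omega_one hx⟩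
      _ ≤ 𝔠 := mk_setOf_hc_rank_lt_le_continuum _
          (by rw [Ordinal.card_omega]; exact aleph_one_le_continuum)
  · calc 𝔠 = #(V_ (ω + 1) : ZFSet.{u}) := ZFSet.mk_vonNeumann_omega0_add_one.symm
      _ ≤ #{x : ZFSet.{u} // HC x} :=
          mk_le_mk_of_subset (s := (V_ (ω + 1) : Set ZFSet)) (t := {x | HC x})
            fun _ hx => hc_of_mem_vonNeumann_omega0_add_one hx

theorem stmt17 :
    (∀ A B : Set {x : ZFSet // HC x}, A.Countable →
      Cardinal.mk B < Cardinal.continuum → Disjoint A B →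
      ∃ v, v ∉ A ∪ B ∧ (∀ a ∈ A, HGraph.Adj v a) ∧ (∀ b ∈ B, ¬ HGraph.Adj v b)) ∧
    Cardinal.mk {x : ZFSet // HC x} = Cardinal.continuum :=
  ⟨hGraph_saturated, mk_hc⟩
end

section
/- There is no graph S of cardinality ω₂ such that both S and its complement graph have colouring number at most ω₁. Consequently, if 𝔠 > ω₁ then there is no prime (ω₁,ω₁)-saturated graph. -/
/-- `G` has colouring number at most `κ`: there is a well-ordering of the vertices
in which every vertex has fewer than `κ` neighbours below it. -/
def ColLE {V : Type*} (G : SimpleGraph V) (κ : Cardinal) : Prop :=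
  ∃ r : V → V → Prop, IsWellOrder V r ∧
    ∀ g : V, Cardinal.mk {h : V | r h g ∧ G.Adj g h} < κ

/-- `(ω₁,ω₁)`-saturation of a graph. -/
def Sat11 {V : Type*} (G : SimpleGraph V) : Prop :=
  ∀ A B : Set V, A.Countable → B.Countable → Disjoint A B →
    ∃ v : V, (∀ a ∈ A, G.Adj v a) ∧ (∀ b ∈ B, ¬ G.Adj v b)

/-!
If well-orders `r`, `r'` of a set of size `κ⁺` witness that `S` and `Sᶜ` have colouring number at
most `κ`, restrict to the elements with at most `κ` predecessors, first for `r` and then, among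
those, for `r'`: `κ⁺` elements remain, and we pick `κ` of them. Only `κ` elements fail to lie
above all of these in both orders, so some `g` has `κ` common predecessors; each of them is a
neighbour of `g` in `S` or in `Sᶜ`, which is too many.

The symmetrised membership graph on hereditarily countable sets is `(ω₁,ω₁)`-saturated, hence so
is its complement, and in a well-order extending membership the earlier neighbours of a set are
among its countably many members. A prime saturated graph `G` embeds into both, so `G` and `Gᶜ`
have colouring number at most `ω₁`, while saturation gives `G` at least `𝔠 ≥ ω₂` vertices.
-/

open Cardinal

universe u

section ColouringNumber

variable {V W : Type u} {κ : Cardinal.{u}}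

theorem ColLE.comap {G : SimpleGraph V} {H : SimpleGraph W} (f : G ↪g H) (h : ColLE H κ) :
    ColLE G κ := by
  obtain ⟨r, hr, hcard⟩ := h
  refine ⟨f.toEmbedding ⁻¹'o r, (RelEmbedding.preimage f.toEmbedding r).isWellOrder, fun g => ?_⟩
  calc #{h | r (f h) (f g) ∧ G.Adj g h}
      = #(f ⁻¹' {h' | r h' (f g) ∧ H.Adj (f g) h'}) := by simp [Set.preimage]
    _ ≤ #{h' | r h' (f g) ∧ H.Adj (f g) h'} := mk_preimage_of_injective _ _ f.injective
    _ < κ := hcard (f g)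

theorem colLE_of_wellFounded {G : SimpleGraph V} {R : V → V → Prop} [IsWellFounded V R]
    (hadj : ∀ x y, G.Adj x y → R x y ∨ R y x) (hR : ∀ y, #{x | R x y} < κ) : ColLE G κ := by
  obtain ⟨s, hRs, hs⟩ := IsWellFounded.exists_well_order_ge R
  have := hs
  refine ⟨s, hs, fun g => (mk_le_mk_of_subset (t := {x | R x g}) ?_).trans_lt (hR g)⟩
  rintro h ⟨hhg, hgh⟩
  exact (hadj g h hgh).resolve_left fun hRgh => asymm_of s hhg (hRs _ _ hRgh)

end ColouringNumber

section TwoWellOrders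

variable {V : Type u} {κ : Cardinal.{u}}

theorem le_mk_setOf_mk_lt (r : V → V → Prop) [IsWellFounded V r] {s : Set V} (hs : κ ≤ #s) :
    κ ≤ #{y ∈ s | #{x ∈ s | r x y} < κ} := by
  set T := {y ∈ s | #{x ∈ s | r x y} < κ}
  by_cases hsT : s ⊆ T
  · exact hs.trans (mk_le_mk_of_subset hsT)
  obtain ⟨m, ⟨hms, hmT⟩, hmin⟩ :=
    (IsWellFounded.wf (r := r)).has_min (s \ T) (Set.sdiff_nonempty.2 hsT)
  calc κ ≤ #{x ∈ s | r x m} := not_lt.1 fun h => hmT ⟨hms, h⟩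
    _ ≤ #T := mk_le_mk_of_subset fun x hx => by_contra fun hxT => hmin x ⟨hx.1, hxT⟩ hx.2

theorem mk_biUnion_le_of_forall_le {ι α : Type u} (hκ : ℵ₀ ≤ κ) {X : Set ι} (hX : #X ≤ κ)
    {t : ι → Set α} (ht : ∀ x ∈ X, #(t x) ≤ κ) : #(⋃ x ∈ X, t x) ≤ κ :=
  calc #(⋃ x ∈ X, t x) ≤ #X * ⨆ x : X, #(t x) := mk_biUnion_le _ _
    _ ≤ κ * κ := mul_le_mul' hX (ciSup_le' fun x : X => ht x.1 x.2)
    _ = κ := mul_eq_self hκ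

theorem mk_sep_not_rel_le (r : V → V → Prop) [IsWellOrder V r] (hκ : ℵ₀ ≤ κ) {s : Set V} {x : V}
    (h : #{g ∈ s | r g x} ≤ κ) : #{g ∈ s | ¬ r x g} ≤ κ :=
  calc #{g ∈ s | ¬ r x g} ≤ #(insert x {g ∈ s | r g x} : Set V) := by
        refine mk_le_mk_of_subset fun g ⟨hg, hxg⟩ => ?_
        rcases trichotomous_of r g x with hgx | rfl | hxg'
        exacts [Or.inr ⟨hg, hgx⟩, Or.inl rfl, (hxg hxg').elim]
    _ ≤ κ + 1 := mk_insert_le.trans (add_le_add_left h 1)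
    _ = κ := add_one_of_aleph0_le hκ

theorem exists_le_mk_setOf_rel_and_rel (r r' : V → V → Prop) [IsWellOrder V r]
    [IsWellOrder V r'] (hκ : ℵ₀ ≤ κ) (hV : Order.succ κ ≤ #V) :
    ∃ g, κ ≤ #{h | r h g ∧ r' h g} := by
  set Y := {y ∈ Set.univ | #{x ∈ Set.univ | r x y} < Order.succ κ}
  have hY : Order.succ κ ≤ #Y := le_mk_setOf_mk_lt r (by rwa [mk_univ])
  obtain ⟨X, hXsub, hX⟩ :=
    le_mk_iff_exists_subset.1 ((Order.le_succ κ).trans (le_mk_setOf_mk_lt r' hY))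
  have hbad : #(⋃ x ∈ X, {g ∈ Set.univ | ¬ r x g} ∪ {g ∈ Y | ¬ r' x g}) ≤ κ := by
    refine mk_biUnion_le_of_forall_le hκ hX.le fun x hx => ?_
    obtain ⟨⟨-, hxY⟩, hxZ⟩ := hXsub hx
    rw [Order.lt_succ_iff] at hxY hxZ
    exact (mk_union_le _ _).trans ((add_le_add (mk_sep_not_rel_le r hκ hxY)
      (mk_sep_not_rel_le r' hκ hxZ)).trans (add_eq_self hκ).le)
  obtain ⟨g, hgY, hg⟩ : ∃ g ∈ Y, g ∉ ⋃ x ∈ X, {g ∈ Set.univ | ¬ r x g} ∪ {g ∈ Y | ¬ r' x g} :=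
    Set.not_subset.1 fun h => (Order.lt_succ_of_le hbad).not_ge (hY.trans (mk_le_mk_of_subset h))
  refine ⟨g, hX.ge.trans (mk_le_mk_of_subset fun x hx => ?_)⟩
  simp only [Set.mem_iUnion, Set.mem_union, Set.mem_ofPred_eq, Set.mem_univ, true_and,
    not_exists, not_or, not_and, not_not] at hg
  exact ⟨(hg x hx).1, (hg x hx).2 hgY⟩

theorem not_colLE_and_colLE_compl (S : SimpleGraph V) (hκ : ℵ₀ ≤ κ) (hV : Order.succ κ ≤ #V) :
    ¬ (ColLE S κ ∧ ColLE Sᶜ κ) := by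
  rintro ⟨⟨r, hr, hS⟩, ⟨r', hr', hSc⟩⟩
  obtain ⟨g, hg⟩ := exists_le_mk_setOf_rel_and_rel r r' hκ hV
  have hsub : {h | r h g ∧ r' h g} ⊆ {h | r h g ∧ S.Adj g h} ∪ {h | r' h g ∧ Sᶜ.Adj g h} := by
    rintro h ⟨hhg, hhg'⟩
    by_cases hadj : S.Adj g h
    · exact Or.inl ⟨hhg, hadj⟩
    · exact Or.inr ⟨hhg', (S.compl_adj g h).2 ⟨ne_of_irrefl' hhg, hadj⟩⟩
  exact (hg.trans ((mk_le_mk_of_subset hsub).trans (mk_union_le _ _))).not_gt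
    (add_lt_of_lt hκ (hS g) (hSc g))

end TwoWellOrders

section Saturation

variable {V : Type u} {G : SimpleGraph V}

theorem Sat11.compl (hG : Sat11 G) : Sat11 Gᶜ := by
  intro A B hA hB hAB
  obtain ⟨u, hu, -⟩ := hG (A ∪ B) ∅ (hA.union hB) Set.countable_empty (Set.disjoint_empty _)
  have huB : u ∉ B := fun h => G.loopless.irrefl u (hu u (Or.inr h))
  -- `u` is adjacent to all of `A`, so a `v` not adjacent to `u` lies outside `A`.
  obtain ⟨v, hvB, hvA⟩ := hG B (insert u A) hB (hA.insert u)
    (Set.disjoint_insert_right.2 ⟨huB, hAB.symm⟩)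
  refine ⟨v, fun a ha => (G.compl_adj v a).2 ⟨?_, hvA a (Or.inr ha)⟩,
    fun b hb h => ((G.compl_adj v b).1 h).2 (hvB b hb)⟩
  rintro rfl
  exact hvA u (Or.inl rfl) (hu v (Or.inl ha)).symm

theorem Sat11.continuum_le_mk (hG : Sat11 G) : 𝔠 ≤ #V := by
  have : Infinite V := by
    refine Set.infinite_univ_iff.1 fun hfin => ?_
    obtain ⟨v, hv, -⟩ := hG Set.univ ∅ hfin.countable Set.countable_empty (Set.disjoint_empty _)
    exact G.loopless.irrefl v (hv v trivial)
  let p := Infinite.natEmbedding V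
  have hcode : ∀ S : Set ℕ, ∃ v, ∀ n, G.Adj v (p n) ↔ n ∈ S := fun S => by
    obtain ⟨v, hS, hSc⟩ := hG (p '' S) (p '' Sᶜ) (S.to_countable.image p)
      (Sᶜ.to_countable.image p) (Set.disjoint_image_of_injective p.injective disjoint_compl_right)
    exact ⟨v, fun n => ⟨fun h => by_contra fun hn => hSc _ ⟨n, hn, rfl⟩ h,
      fun hn => hS _ ⟨n, hn, rfl⟩⟩⟩
  choose v hv using hcode
  have hinj : Function.Injective v := fun S T h => Set.ext fun n => by rw [← hv, ← hv, h]
  simpa using lift_mk_le_lift_mk_of_injective hinj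

end Saturation

/-- Codes for hereditarily countable sets: `node f` stands for the set `Set.range f`. -/
inductive HC_s18 : Type
  | empty : HC_s18
  | node : (ℕ → HC_s18) → HC_s18

namespace HC_s18

instance : Membership HC_s18 HC_s18 where
  mem
    | empty, _ => False
    | node f, x => x ∈ Set.range f

instance : IsWellFounded HC_s18 (· ∈ ·) := by
  refine ⟨⟨fun x => ?_⟩⟩
  induction x with
  | empty => exact ⟨_, fun y h => h.elim⟩
  | node f ih => exact ⟨_, fun y ⟨n, hn⟩ => hn ▸ ih n⟩

theorem mem_irrefl (x : HC_s18) : x ∉ x := irrefl_of (α := HC_s18) (· ∈ ·) x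

theorem rank_lt_of_mem {x y : HC_s18} (h : x ∈ y) :
    IsWellFounded.rank (· ∈ ·) x < IsWellFounded.rank (· ∈ ·) y :=
  IsWellFounded.rank_lt_of_rel (r := (· ∈ ·)) h

theorem countable_setOf_mem (y : HC_s18) : {x | x ∈ y}.Countable := by
  cases y with
  | empty => exact Set.countable_empty.mono fun _ h => h.elim
  | node f => exact Set.countable_range f

open Classical in
noncomputable def ofCountable (s : Set HC_s18) (hs : s.Countable) : HC_s18 :=
  if h : s.Nonempty then node (hs.exists_eq_range h).choose else empty

theorem mem_ofCountable {x : HC_s18} {s : Set HC_s18} {hs : s.Countable} :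
    x ∈ ofCountable s hs ↔ x ∈ s := by
  unfold ofCountable
  split_ifs with h
  · exact (Set.ext_iff.1 (hs.exists_eq_range h).choose_spec x).symm
  · exact iff_of_false (fun h => h.elim) fun hx => h ⟨x, hx⟩

def memGraph : SimpleGraph HC_s18 where
  Adj x y := x ∈ y ∨ y ∈ x
  symm := ⟨fun _ _ => Or.symm⟩
  loopless := ⟨fun x h => h.elim (mem_irrefl x) (mem_irrefl x)⟩

theorem sat11_memGraph : Sat11 memGraph := by
  intro A B hA hB hAB
  set c := ofCountable B hB
  set v := ofCountable (insert c A) (hA.insert c)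
  refine ⟨v, fun a ha => Or.inr (mem_ofCountable.2 (Or.inr ha)), ?_⟩
  rintro b hb (hvb | hbv)
  · -- `v ∈ b ∈ c ∈ v` is a membership cycle
    have hbc : b ∈ c := mem_ofCountable.2 hb
    have hcv : c ∈ v := mem_ofCountable.2 (Or.inl rfl)
    exact lt_irrefl _
      ((rank_lt_of_mem hvb).trans ((rank_lt_of_mem hbc).trans (rank_lt_of_mem hcv)))
  · rcases mem_ofCountable.1 hbv with rfl | hbA
    · exact mem_irrefl _ (mem_ofCountable.2 hb)
    · exact hAB.ne_of_mem hbA hb rfl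

theorem colLE_memGraph : ColLE memGraph ℵ₁ :=
  colLE_of_wellFounded (R := (· ∈ ·)) (fun _ _ h => h)
    fun y => lt_aleph_one_iff.2 (countable_setOf_mem y).le_aleph0

end HC_s18

theorem stmt18 :
    (¬ ∃ (V : Type) (S : SimpleGraph V), Cardinal.mk V = Cardinal.aleph 2 ∧
      ColLE S (Cardinal.aleph 1) ∧ ColLE Sᶜ (Cardinal.aleph 1)) ∧
    (Cardinal.aleph 1 < Cardinal.continuum →
      ¬ ∃ (V : Type) (G : SimpleGraph V), Sat11 G ∧
        ∀ (W : Type) (H : SimpleGraph W), Sat11 H → Nonempty (G ↪g H)) := by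
  have succ_aleph_one : Order.succ ℵ₁ = ℵ_ 2 := by rw [succ_aleph, one_add_one_eq_two]
  refine ⟨fun ⟨V, S, hV, hS, hSc⟩ =>
    not_colLE_and_colLE_compl S (aleph0_le_aleph 1) (by rw [hV, succ_aleph_one]) ⟨hS, hSc⟩, ?_⟩
  rintro hc ⟨V, G, hG, hprime⟩
  have hc₀ : ℵ₁ < (𝔠 : Cardinal.{0}) := lift_lt.{0}.1 (by simpa using hc)
  obtain ⟨f⟩ := hprime HC_s18 HC_s18.memGraph HC_s18.sat11_memGraph
  obtain ⟨f'⟩ := hprime HC_s18 HC_s18.memGraphᶜ HC_s18.sat11_memGraph.compl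
  have hcolc : ColLE Gᶜ ℵ₁ := by
    refine ColLE.comap (SimpleGraph.Embedding.complEquiv f') ?_
    rw [compl_compl]
    exact HC_s18.colLE_memGraph
  exact not_colLE_and_colLE_compl G (aleph0_le_aleph 1)
    ((Order.succ_le_of_lt hc₀).trans hG.continuum_le_mk) ⟨HC_s18.colLE_memGraph.comap f, hcolc⟩
end
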